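/- arXiv:2507.10830 — 14 statements merged into one kernel-verified Lean document; each statement's English description precedes it below -/
import Mathlib

section
/- Wire-cutting Bell inequality (Lemma 1): Fix a communication task with Alice inputs Fin M, Bob outputs Fin N, a classical channel 𝒯 on Fin T, and payoff coefficients w : Fin M → Fin N → ℝ. Let s : ℝ be such that S(𝒩) ≤ s for every shared-randomness-assisted realizable conditional distribution 𝒩. Then for every local bipartite correlation P with Alice inputs Fin M, Alice outputs Fin T, Bob inputs Fin T, Bob outputs Fin N, the associated Bell functional satisfies B(P) = ∑_{m,τ,τ',n} w m n · 𝒯 τ' τ · P m τ' τ n ≤ s. -/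
open Finset

/-- Wire-cutting Bell inequality (Lemma 1): if the payoff of every
shared-randomness-assisted realizable conditional distribution is bounded by `s`,
then the associated Bell functional of every local bipartite correlation is bounded by `s`. -/
theorem wire_cutting_bell_inequality
    (M N T : ℕ)
    (𝒯 : Fin T → Fin T → ℝ)
    (h𝒯0 : ∀ τ' τ, 0 ≤ 𝒯 τ' τ)
    (h𝒯1 : ∀ τ, ∑ τ' : Fin T, 𝒯 τ' τ = 1)
    (w : Fin M → Fin N → ℝ)
    (s : ℝ)
    (hs : ∀ 𝒩 : Fin M → Fin N → ℝ,
      (∃ (L : ℕ) (μ : Fin L → ℝ) (pe : Fin T → Fin M → Fin L → ℝ)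
          (pd : Fin N → Fin T → Fin L → ℝ),
        (∀ l, 0 ≤ μ l) ∧ (∑ l, μ l = 1) ∧
        (∀ τ m l, 0 ≤ pe τ m l) ∧ (∀ m l, ∑ τ : Fin T, pe τ m l = 1) ∧
        (∀ n τ' l, 0 ≤ pd n τ' l) ∧ (∀ τ' l, ∑ n : Fin N, pd n τ' l = 1) ∧
        (∀ m n, 𝒩 m n = ∑ l, ∑ τ : Fin T, ∑ τ' : Fin T,
          μ l * pe τ m l * 𝒯 τ' τ * pd n τ' l)) →
      ∑ m, ∑ n, w m n * 𝒩 m n ≤ s)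
    -- `P m τ' τ n` : Alice input `m`, Bob input `τ'`, Alice output `τ`, Bob output `n`
    (P : Fin M → Fin T → Fin T → Fin N → ℝ)
    (hlocal : ∃ (L : ℕ) (μ : Fin L → ℝ) (pA : Fin T → Fin M → Fin L → ℝ)
        (pB : Fin N → Fin T → Fin L → ℝ),
      (∀ l, 0 ≤ μ l) ∧ (∑ l, μ l = 1) ∧
      (∀ τ m l, 0 ≤ pA τ m l) ∧ (∀ m l, ∑ τ : Fin T, pA τ m l = 1) ∧
      (∀ n τ' l, 0 ≤ pB n τ' l) ∧ (∀ τ' l, ∑ n : Fin N, pB n τ' l = 1) ∧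
      (∀ m τ' τ n, P m τ' τ n = ∑ l, μ l * pA τ m l * pB n τ' l)) :
    ∑ m, ∑ τ : Fin T, ∑ τ' : Fin T, ∑ n, w m n * 𝒯 τ' τ * P m τ' τ n ≤ s := by
  obtain ⟨L, μ, pA, pB, hμ0, hμ1, hA0, hA1, hB0, hB1, hP⟩ := hlocal
  have key := hs (fun m n => ∑ l, ∑ τ : Fin T, ∑ τ' : Fin T,
      μ l * pA τ m l * 𝒯 τ' τ * pB n τ' l)
    ⟨L, μ, pA, pB, hμ0, hμ1, hA0, hA1, hB0, hB1, fun m n => rfl⟩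
  refine le_trans (le_of_eq ?_) key
  refine Finset.sum_congr rfl fun m _ => ?_
  have swap : ∀ (f : Fin T → Fin T → Fin N → Fin L → ℝ),
      ∑ τ, ∑ τ', ∑ n, ∑ l, f τ τ' n l = ∑ n, ∑ l, ∑ τ, ∑ τ', f τ τ' n l := by
    intro f
    calc ∑ τ, ∑ τ', ∑ n, ∑ l, f τ τ' n l
        = ∑ τ, ∑ n, ∑ τ', ∑ l, f τ τ' n l :=
          Finset.sum_congr rfl fun τ _ => Finset.sum_comm
      _ = ∑ n, ∑ τ, ∑ τ', ∑ l, f τ τ' n l := Finset.sum_comm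
      _ = ∑ n, ∑ τ, ∑ l, ∑ τ', f τ τ' n l :=
          Finset.sum_congr rfl fun n _ =>
            Finset.sum_congr rfl fun τ _ => Finset.sum_comm
      _ = ∑ n, ∑ l, ∑ τ, ∑ τ', f τ τ' n l :=
          Finset.sum_congr rfl fun n _ => Finset.sum_comm
  calc ∑ τ : Fin T, ∑ τ' : Fin T, ∑ n, w m n * 𝒯 τ' τ * P m τ' τ n
      = ∑ τ : Fin T, ∑ τ' : Fin T, ∑ n, ∑ l,
          w m n * (μ l * pA τ m l * 𝒯 τ' τ * pB n τ' l) := by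
        refine Finset.sum_congr rfl fun τ _ => Finset.sum_congr rfl fun τ' _ =>
          Finset.sum_congr rfl fun n _ => ?_
        rw [hP]; simp only [Finset.mul_sum]
        exact Finset.sum_congr rfl fun l _ => by ring
    _ = ∑ n, ∑ l, ∑ τ : Fin T, ∑ τ' : Fin T,
          w m n * (μ l * pA τ m l * 𝒯 τ' τ * pB n τ' l) := swap _
    _ = ∑ n, w m n * ∑ l, ∑ τ : Fin T, ∑ τ' : Fin T,
          μ l * pA τ m l * 𝒯 τ' τ * pB n τ' l := by
        simp [Finset.mul_sum]
end

section
/- Communication advantage implies Bell violation (Theorem 1, second direction): Let 𝒯 be a classical channel on Fin T and suppose 𝒩 : Fin M → Fin N → ℝ is realizable using assistance of a no-signalling correlation P̃ (Alice inputs Fin X, outputs Fin A; Bob inputs Fin Y, outputs Fin B) for the channel 𝒯, i.e., there exist conditional probability distributions p(x|m), p_e(τ|a,m), p(y|τ'), p_d(n|τ',b) with 𝒩 m n = ∑_{a,b,x,y,τ,τ'} p(x|m)·p_e(τ|a,m)·P̃ x y a b·𝒯 τ' τ·p(y|τ')·p_d(n|τ',b). Then there exists a no-signalling bipartite correlation P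 with Alice inputs Fin M, Alice outputs Fin T, Bob inputs Fin T, Bob outputs Fin N such that 𝒩 m n = ∑_{τ,τ'} 𝒯 τ' τ · P m τ' τ n for all m,n; consequently B(P) = S(𝒩), so if S(𝒩) > s for a real s then B(P) > s, where S(𝒩) = ∑_{m,n} w m n · 𝒩 m n and B(P) = ∑_{m,τ,τ',n} w m n · 𝒯 τ' τ · P m τ' τ n. -/
open Finset

lemma sum_pull2 {α β γ M : Type*} [Fintype α] [Fintype β] [Fintype γ] [AddCommMonoid M]
    (f : α → β → γ → M) :
    ∑ a, ∑ b, ∑ c, f a b c = ∑ b, ∑ c, ∑ a, f a b c := by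
  rw [Finset.sum_comm]
  exact Finset.sum_congr rfl fun b _ => Finset.sum_comm

lemma sum_pull4 {α β γ δ ε M : Type*} [Fintype α] [Fintype β] [Fintype γ] [Fintype δ]
    [Fintype ε] [AddCommMonoid M] (f : α → β → γ → δ → ε → M) :
    ∑ a, ∑ b, ∑ c, ∑ d, ∑ e, f a b c d e = ∑ b, ∑ c, ∑ d, ∑ e, ∑ a, f a b c d e := by
  rw [Finset.sum_comm]
  refine Finset.sum_congr rfl fun b _ => ?_
  rw [Finset.sum_comm]
  refine Finset.sum_congr rfl fun c _ => ?_
  rw [Finset.sum_comm]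
  exact Finset.sum_congr rfl fun d _ => Finset.sum_comm

lemma sum_reorder6 {α β γ δ ε ζ M : Type*} [Fintype α] [Fintype β] [Fintype γ] [Fintype δ]
    [Fintype ε] [Fintype ζ] [AddCommMonoid M] (f : α → β → γ → δ → ε → ζ → M) :
    ∑ a, ∑ b, ∑ c, ∑ d, ∑ e, ∑ g, f a b c d e g
      = ∑ e, ∑ g, ∑ c, ∑ d, ∑ a, ∑ b, f a b c d e g := by
  calc ∑ a, ∑ b, ∑ c, ∑ d, ∑ e, ∑ g, f a b c d e g
      = ∑ b, ∑ c, ∑ d, ∑ e, ∑ a, ∑ g, f a b c d e g := sum_pull4 _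
    _ = ∑ c, ∑ d, ∑ e, ∑ a, ∑ b, ∑ g, f a b c d e g := sum_pull4 _
    _ = ∑ d, ∑ e, ∑ a, ∑ b, ∑ c, ∑ g, f a b c d e g := sum_pull4 _
    _ = ∑ e, ∑ a, ∑ b, ∑ c, ∑ d, ∑ g, f a b c d e g := sum_pull4 _
    _ = ∑ e, ∑ b, ∑ c, ∑ d, ∑ g, ∑ a, f a b c d e g :=
        Finset.sum_congr rfl fun e _ => sum_pull4 _
    _ = ∑ e, ∑ c, ∑ d, ∑ g, ∑ a, ∑ b, f a b c d e g :=
        Finset.sum_congr rfl fun e _ => sum_pull4 _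
    _ = ∑ e, ∑ d, ∑ g, ∑ a, ∑ b, ∑ c, f a b c d e g :=
        Finset.sum_congr rfl fun e _ => sum_pull4 _
    _ = ∑ e, ∑ g, ∑ a, ∑ b, ∑ c, ∑ d, f a b c d e g :=
        Finset.sum_congr rfl fun e _ => sum_pull4 _
    _ = ∑ e, ∑ g, ∑ b, ∑ c, ∑ a, ∑ d, f a b c d e g :=
        Finset.sum_congr rfl fun e _ => Finset.sum_congr rfl fun g _ => sum_pull2 _
    _ = ∑ e, ∑ g, ∑ c, ∑ a, ∑ b, ∑ d, f a b c d e g :=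
        Finset.sum_congr rfl fun e _ => Finset.sum_congr rfl fun g _ => sum_pull2 _
    _ = ∑ e, ∑ g, ∑ c, ∑ b, ∑ d, ∑ a, f a b c d e g :=
        Finset.sum_congr rfl fun e _ => Finset.sum_congr rfl fun g _ =>
          Finset.sum_congr rfl fun c _ => sum_pull2 _
    _ = ∑ e, ∑ g, ∑ c, ∑ d, ∑ a, ∑ b, f a b c d e g :=
        Finset.sum_congr rfl fun e _ => Finset.sum_congr rfl fun g _ =>
          Finset.sum_congr rfl fun c _ => sum_pull2 _

/-- Communication advantage implies Bell violation (Theorem 1, second direction). -/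
theorem advantage_implies_bell_violation
    (M N T X Y A B : ℕ)
    (𝒯 : Fin T → Fin T → ℝ)
    (h𝒯0 : ∀ τ' τ, 0 ≤ 𝒯 τ' τ)
    (h𝒯1 : ∀ τ, ∑ τ' : Fin T, 𝒯 τ' τ = 1)
    (w : Fin M → Fin N → ℝ)
    -- the assisting no-signalling correlation P̃
    (Pt : Fin X → Fin Y → Fin A → Fin B → ℝ)
    (hPt0 : ∀ x y a b, 0 ≤ Pt x y a b)
    (hPt1 : ∀ x y, ∑ a : Fin A, ∑ b : Fin B, Pt x y a b = 1)
    (hPtNSA : ∀ x a y₁ y₂, ∑ b : Fin B, Pt x y₁ a b = ∑ b : Fin B, Pt x y₂ a b)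
    (hPtNSB : ∀ y b x₁ x₂, ∑ a : Fin A, Pt x₁ y a b = ∑ a : Fin A, Pt x₂ y a b)
    -- the local pre/post-processing strategies
    (px : Fin X → Fin M → ℝ)
    (hpx0 : ∀ x m, 0 ≤ px x m) (hpx1 : ∀ m, ∑ x : Fin X, px x m = 1)
    (pe : Fin T → Fin A → Fin M → ℝ)
    (hpe0 : ∀ τ a m, 0 ≤ pe τ a m) (hpe1 : ∀ a m, ∑ τ : Fin T, pe τ a m = 1)
    (py : Fin Y → Fin T → ℝ)
    (hpy0 : ∀ y τ', 0 ≤ py y τ') (hpy1 : ∀ τ', ∑ y : Fin Y, py y τ' = 1)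
    (pd : Fin N → Fin T → Fin B → ℝ)
    (hpd0 : ∀ n τ' b, 0 ≤ pd n τ' b) (hpd1 : ∀ τ' b, ∑ n : Fin N, pd n τ' b = 1)
    (𝒩 : Fin M → Fin N → ℝ)
    (h𝒩 : ∀ m n, 𝒩 m n =
      ∑ a : Fin A, ∑ b : Fin B, ∑ x : Fin X, ∑ y : Fin Y, ∑ τ : Fin T, ∑ τ' : Fin T,
        px x m * pe τ a m * Pt x y a b * 𝒯 τ' τ * py y τ' * pd n τ' b) :
    -- there is a no-signalling correlation P (obtained by cutting the wire)
    ∃ P : Fin M → Fin T → Fin T → Fin N → ℝ,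
      (∀ m τ' τ n, 0 ≤ P m τ' τ n) ∧
      (∀ m τ', ∑ τ : Fin T, ∑ n : Fin N, P m τ' τ n = 1) ∧
      (∀ m τ τ'₁ τ'₂, ∑ n : Fin N, P m τ'₁ τ n = ∑ n : Fin N, P m τ'₂ τ n) ∧
      (∀ τ' n m₁ m₂, ∑ τ : Fin T, P m₁ τ' τ n = ∑ τ : Fin T, P m₂ τ' τ n) ∧
      (∀ m n, 𝒩 m n = ∑ τ : Fin T, ∑ τ' : Fin T, 𝒯 τ' τ * P m τ' τ n) ∧
      (∑ m, ∑ τ : Fin T, ∑ τ' : Fin T, ∑ n, w m n * 𝒯 τ' τ * P m τ' τ n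
        = ∑ m, ∑ n, w m n * 𝒩 m n) ∧
      (∀ s : ℝ, (∑ m, ∑ n, w m n * 𝒩 m n) > s →
        (∑ m, ∑ τ : Fin T, ∑ τ' : Fin T, ∑ n, w m n * 𝒯 τ' τ * P m τ' τ n) > s) := by
  set P : Fin M → Fin T → Fin T → Fin N → ℝ := fun m τ' τ n =>
    ∑ x : Fin X, ∑ y : Fin Y, ∑ a : Fin A, ∑ b : Fin B,
      px x m * pe τ a m * py y τ' * pd n τ' b * Pt x y a b with hPdef
  -- marginal over n
  have nmarg : ∀ m τ' τ, ∑ n : Fin N, P m τ' τ n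
      = ∑ x : Fin X, ∑ y : Fin Y, ∑ a : Fin A, ∑ b : Fin B,
          px x m * pe τ a m * py y τ' * Pt x y a b := by
    intro m τ' τ
    rw [hPdef]
    rw [sum_pull4 (fun n x y a b =>
      px x m * pe τ a m * py y τ' * pd n τ' b * Pt x y a b)]
    refine Finset.sum_congr rfl fun x _ => Finset.sum_congr rfl fun y _ =>
      Finset.sum_congr rfl fun a _ => Finset.sum_congr rfl fun b _ => ?_
    calc ∑ n : Fin N, px x m * pe τ a m * py y τ' * pd n τ' b * Pt x y a b
        = (px x m * pe τ a m * py y τ' * Pt x y a b) * ∑ n : Fin N, pd n τ' b := by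
          rw [Finset.mul_sum]; exact Finset.sum_congr rfl fun n _ => by ring
      _ = px x m * pe τ a m * py y τ' * Pt x y a b := by rw [hpd1, mul_one]
  -- marginal over τ
  have tmarg : ∀ m τ' n, ∑ τ : Fin T, P m τ' τ n
      = ∑ x : Fin X, ∑ y : Fin Y, ∑ b : Fin B,
          px x m * py y τ' * pd n τ' b * (∑ a : Fin A, Pt x y a b) := by
    intro m τ' n
    rw [hPdef]
    rw [sum_pull4 (fun τ x y a b =>
      px x m * pe τ a m * py y τ' * pd n τ' b * Pt x y a b)]
    refine Finset.sum_congr rfl fun x _ => Finset.sum_congr rfl fun y _ => ?_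
    rw [Finset.sum_comm]
    refine Finset.sum_congr rfl fun b _ => ?_
    rw [Finset.mul_sum]
    refine Finset.sum_congr rfl fun a _ => ?_
    calc ∑ τ : Fin T, px x m * pe τ a m * py y τ' * pd n τ' b * Pt x y a b
        = (px x m * py y τ' * pd n τ' b * Pt x y a b) * ∑ τ : Fin T, pe τ a m := by
          rw [Finset.mul_sum]; exact Finset.sum_congr rfl fun τ _ => by ring
      _ = px x m * py y τ' * pd n τ' b * Pt x y a b := by rw [hpe1, mul_one]
  -- nonnegativity
  have h1 : ∀ m τ' τ n, 0 ≤ P m τ' τ n := by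
    intro m τ' τ n
    rw [hPdef]
    refine Finset.sum_nonneg fun x _ => Finset.sum_nonneg fun y _ =>
      Finset.sum_nonneg fun a _ => Finset.sum_nonneg fun b _ => ?_
    exact mul_nonneg (mul_nonneg (mul_nonneg (mul_nonneg (hpx0 _ _) (hpe0 _ _ _))
      (hpy0 _ _)) (hpd0 _ _ _)) (hPt0 _ _ _ _)
  -- normalization
  have h2 : ∀ m τ', ∑ τ : Fin T, ∑ n : Fin N, P m τ' τ n = 1 := by
    intro m τ'
    calc ∑ τ : Fin T, ∑ n : Fin N, P m τ' τ n
        = ∑ τ : Fin T, ∑ x : Fin X, ∑ y : Fin Y, ∑ a : Fin A, ∑ b : Fin B,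
            px x m * pe τ a m * py y τ' * Pt x y a b :=
          Finset.sum_congr rfl fun τ _ => nmarg m τ' τ
      _ = ∑ x : Fin X, ∑ y : Fin Y, ∑ a : Fin A, ∑ b : Fin B, ∑ τ : Fin T,
            px x m * pe τ a m * py y τ' * Pt x y a b :=
          sum_pull4 (fun τ x y a b => px x m * pe τ a m * py y τ' * Pt x y a b)
      _ = ∑ x : Fin X, ∑ y : Fin Y, ∑ a : Fin A, ∑ b : Fin B,
            px x m * py y τ' * Pt x y a b := by
          refine Finset.sum_congr rfl fun x _ => Finset.sum_congr rfl fun y _ =>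
            Finset.sum_congr rfl fun a _ => Finset.sum_congr rfl fun b _ => ?_
          calc ∑ τ : Fin T, px x m * pe τ a m * py y τ' * Pt x y a b
              = (px x m * py y τ' * Pt x y a b) * ∑ τ : Fin T, pe τ a m := by
                rw [Finset.mul_sum]; exact Finset.sum_congr rfl fun τ _ => by ring
            _ = px x m * py y τ' * Pt x y a b := by rw [hpe1, mul_one]
      _ = ∑ x : Fin X, ∑ y : Fin Y, px x m * py y τ' := by
          refine Finset.sum_congr rfl fun x _ => Finset.sum_congr rfl fun y _ => ?_
          calc ∑ a : Fin A, ∑ b : Fin B, px x m * py y τ' * Pt x y a b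
              = (px x m * py y τ') * ∑ a : Fin A, ∑ b : Fin B, Pt x y a b := by
                rw [Finset.mul_sum]
                exact Finset.sum_congr rfl fun a _ => by rw [Finset.mul_sum]
            _ = px x m * py y τ' := by rw [hPt1, mul_one]
      _ = ∑ x : Fin X, px x m := by
          refine Finset.sum_congr rfl fun x _ => ?_
          rw [← Finset.mul_sum, hpy1, mul_one]
      _ = 1 := hpx1 m
  -- no-signalling Bob→Alice of the cut-wire box: ∑ n P indep of τ'
  have h3 : ∀ m τ τ'₁ τ'₂, ∑ n : Fin N, P m τ'₁ τ n = ∑ n : Fin N, P m τ'₂ τ n := by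
    intro m τ τ'₁ τ'₂
    have hYne : Nonempty (Fin Y) := by
      by_contra h
      rw [not_nonempty_iff] at h
      have := hpy1 τ'₁
      rw [Finset.univ_eq_empty, Finset.sum_empty] at this
      exact zero_ne_one this
    obtain ⟨y₀⟩ := hYne
    have key : ∀ τ' : Fin T, ∑ n : Fin N, P m τ' τ n
        = ∑ x : Fin X, ∑ a : Fin A, px x m * pe τ a m * (∑ b : Fin B, Pt x y₀ a b) := by
      intro τ'
      rw [nmarg m τ' τ]
      refine Finset.sum_congr rfl fun x _ => ?_
      calc ∑ y : Fin Y, ∑ a : Fin A, ∑ b : Fin B, px x m * pe τ a m * py y τ' * Pt x y a b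
          = ∑ y : Fin Y, (∑ a : Fin A, px x m * pe τ a m * (∑ b : Fin B, Pt x y₀ a b))
              * py y τ' := by
            refine Finset.sum_congr rfl fun y _ => ?_
            rw [Finset.sum_mul]
            refine Finset.sum_congr rfl fun a _ => ?_
            rw [← hPtNSA x a y y₀, Finset.mul_sum, Finset.sum_mul]
            exact Finset.sum_congr rfl fun b _ => by ring
        _ = (∑ a : Fin A, px x m * pe τ a m * (∑ b : Fin B, Pt x y₀ a b))
              * ∑ y : Fin Y, py y τ' := by rw [Finset.mul_sum]
        _ = ∑ a : Fin A, px x m * pe τ a m * (∑ b : Fin B, Pt x y₀ a b) := by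
            rw [hpy1, mul_one]
    rw [key τ'₁, key τ'₂]
  -- no-signalling Alice→Bob: ∑ τ P indep of m
  have h4 : ∀ τ' n m₁ m₂, ∑ τ : Fin T, P m₁ τ' τ n = ∑ τ : Fin T, P m₂ τ' τ n := by
    intro τ' n m₁ m₂
    have hXne : Nonempty (Fin X) := by
      by_contra h
      rw [not_nonempty_iff] at h
      have := hpx1 m₁
      rw [Finset.univ_eq_empty, Finset.sum_empty] at this
      exact zero_ne_one this
    obtain ⟨x₀⟩ := hXne
    have key : ∀ m : Fin M, ∑ τ : Fin T, P m τ' τ n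
        = ∑ y : Fin Y, ∑ b : Fin B, py y τ' * pd n τ' b * (∑ a : Fin A, Pt x₀ y a b) := by
      intro m
      rw [tmarg m τ' n]
      calc ∑ x : Fin X, ∑ y : Fin Y, ∑ b : Fin B,
              px x m * py y τ' * pd n τ' b * (∑ a : Fin A, Pt x y a b)
          = ∑ x : Fin X, (∑ y : Fin Y, ∑ b : Fin B,
              py y τ' * pd n τ' b * (∑ a : Fin A, Pt x₀ y a b)) * px x m := by
            refine Finset.sum_congr rfl fun x _ => ?_
            rw [Finset.sum_mul]
            refine Finset.sum_congr rfl fun y _ => ?_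
            rw [Finset.sum_mul]
            refine Finset.sum_congr rfl fun b _ => ?_
            rw [hPtNSB y b x x₀]
            ring
        _ = (∑ y : Fin Y, ∑ b : Fin B,
              py y τ' * pd n τ' b * (∑ a : Fin A, Pt x₀ y a b)) * ∑ x : Fin X, px x m := by
            rw [Finset.mul_sum]
        _ = ∑ y : Fin Y, ∑ b : Fin B,
              py y τ' * pd n τ' b * (∑ a : Fin A, Pt x₀ y a b) := by
            rw [hpx1, mul_one]
    rw [key m₁, key m₂]
  -- simulation identity
  have h5 : ∀ m n, 𝒩 m n = ∑ τ : Fin T, ∑ τ' : Fin T, 𝒯 τ' τ * P m τ' τ n := by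
    intro m n
    rw [h𝒩 m n]
    rw [sum_reorder6 (fun a b x y τ τ' =>
      px x m * pe τ a m * Pt x y a b * 𝒯 τ' τ * py y τ' * pd n τ' b)]
    refine Finset.sum_congr rfl fun τ _ => Finset.sum_congr rfl fun τ' _ => ?_
    rw [hPdef, Finset.mul_sum]
    refine Finset.sum_congr rfl fun x _ => ?_
    rw [Finset.mul_sum]
    refine Finset.sum_congr rfl fun y _ => ?_
    rw [Finset.mul_sum]
    refine Finset.sum_congr rfl fun a _ => ?_
    rw [Finset.mul_sum]
    exact Finset.sum_congr rfl fun b _ => by ring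
  -- the Bell value equals the score
  have h6 : ∑ m, ∑ τ : Fin T, ∑ τ' : Fin T, ∑ n, w m n * 𝒯 τ' τ * P m τ' τ n
      = ∑ m, ∑ n, w m n * 𝒩 m n := by
    refine Finset.sum_congr rfl fun m _ => ?_
    calc ∑ τ : Fin T, ∑ τ' : Fin T, ∑ n, w m n * 𝒯 τ' τ * P m τ' τ n
        = ∑ n, ∑ τ : Fin T, ∑ τ' : Fin T, w m n * 𝒯 τ' τ * P m τ' τ n :=
          (sum_pull2 (fun n τ τ' => w m n * 𝒯 τ' τ * P m τ' τ n)).symm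
      _ = ∑ n, w m n * 𝒩 m n := by
          refine Finset.sum_congr rfl fun n _ => ?_
          rw [h5 m n, Finset.mul_sum]
          refine Finset.sum_congr rfl fun τ _ => ?_
          rw [Finset.mul_sum]
          exact Finset.sum_congr rfl fun τ' _ => by ring
  exact ⟨P, h1, h2, h3, h4, h5, h6, fun s hs => by rw [h6]; exact hs⟩
end

section
/- Shared-randomness bound for CS[d,k] (Theorem 2): Let d, k ≥ 2. The maximum of the payoff S_W over all shared-randomness-assisted wire-reading distributions for the task CS[d,k] equals 1 - 1/k^d; that is, every shared-randomness-assisted wire-reading distribution 𝒩 satisfies S_W(𝒩) ≤ 1 - 1/k^d, and there exists a shared-randomness-assisted wire-reading distribution attaining S_W(𝒩) = 1 - 1/k^d. -/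
open Finset

noncomputable def CSPayoff (d k : ℕ) (𝒩 : Fin d → Fin k → (Fin d → Fin k) → ℝ) : ℝ :=
  (1 / (k : ℝ) ^ d) * ∑ m : Fin d → Fin k, ∑ τ' : Fin d,
    ∑ n ∈ Finset.univ.filter (fun n : Fin k => n ≠ m τ'), 𝒩 τ' n m

/-- Shared-randomness bound for CS[d,k] (Theorem 2): the maximum payoff over all
shared-randomness-assisted wire-reading distributions equals `1 - 1/k^d`. -/
theorem CS_shared_randomness_bound (d k : ℕ) (hd : 2 ≤ d) (hk : 2 ≤ k) :
    (∀ (L : ℕ) (μ : Fin L → ℝ)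
       (pe : Fin d → (Fin d → Fin k) → Fin L → ℝ)
       (pd : Fin k → Fin d → Fin L → ℝ),
       (∀ l, 0 ≤ μ l) → (∑ l, μ l = 1) →
       (∀ τ' m l, 0 ≤ pe τ' m l) → (∀ m l, ∑ τ' : Fin d, pe τ' m l = 1) →
       (∀ n τ' l, 0 ≤ pd n τ' l) → (∀ τ' l, ∑ n : Fin k, pd n τ' l = 1) →
       CSPayoff d k (fun τ' n m => ∑ l, μ l * pe τ' m l * pd n τ' l)
         ≤ 1 - 1 / (k : ℝ) ^ d) ∧
    (∃ (L : ℕ) (μ : Fin L → ℝ)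
       (pe : Fin d → (Fin d → Fin k) → Fin L → ℝ)
       (pd : Fin k → Fin d → Fin L → ℝ),
       (∀ l, 0 ≤ μ l) ∧ (∑ l, μ l = 1) ∧
       (∀ τ' m l, 0 ≤ pe τ' m l) ∧ (∀ m l, ∑ τ' : Fin d, pe τ' m l = 1) ∧
       (∀ n τ' l, 0 ≤ pd n τ' l) ∧ (∀ τ' l, ∑ n : Fin k, pd n τ' l = 1) ∧
       CSPayoff d k (fun τ' n m => ∑ l, μ l * pe τ' m l * pd n τ' l)
         = 1 - 1 / (k : ℝ) ^ d) := by
  have hkd : (0:ℝ) < (k:ℝ)^d := by positivity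
  have hcard : Fintype.card (Fin d → Fin k) = k ^ d := by
    simp [Fintype.card_fun]
  constructor
  · intro L μ pe pd hμ0 hμ1 hpe0 hpe1 hpd0 hpd1
    have hpd_le : ∀ n τ' l, pd n τ' l ≤ 1 := by
      intro n τ' l
      calc pd n τ' l ≤ ∑ n', pd n' τ' l :=
            Finset.single_le_sum (fun i _ => hpd0 i τ' l) (mem_univ n)
        _ = 1 := hpd1 τ' l
    have key : ∀ l : Fin L,
        1 ≤ ∑ m : Fin d → Fin k, ∑ τ', pe τ' m l * pd (m τ') τ' l := by
      intro l
      have h1 : ∀ (m : Fin d → Fin k) (τ' : Fin d),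
          (∏ σ, pd (m σ) σ l) ≤ pd (m τ') τ' l := by
        intro m τ'
        rw [← Finset.mul_prod_erase univ _ (mem_univ τ')]
        calc pd (m τ') τ' l * ∏ σ ∈ univ.erase τ', pd (m σ) σ l
            ≤ pd (m τ') τ' l * 1 := by
              apply mul_le_mul_of_nonneg_left _ (hpd0 _ _ _)
              exact Finset.prod_le_one (fun i _ => hpd0 _ _ _) (fun i _ => hpd_le _ _ _)
          _ = pd (m τ') τ' l := mul_one _
      calc (1:ℝ) = ∏ σ : Fin d, ∑ n : Fin k, pd n σ l := by simp [hpd1]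
        _ = ∑ m ∈ Fintype.piFinset (fun _ : Fin d => (univ : Finset (Fin k))),
              ∏ σ, pd (m σ) σ l := Finset.prod_univ_sum _ _
        _ = ∑ m : Fin d → Fin k, ∏ σ, pd (m σ) σ l := by
              rw [Fintype.piFinset_univ]
        _ = ∑ m : Fin d → Fin k, ∑ τ', pe τ' m l * ∏ σ, pd (m σ) σ l := by
              refine Finset.sum_congr rfl fun m _ => ?_
              rw [← Finset.sum_mul, hpe1, one_mul]
        _ ≤ ∑ m : Fin d → Fin k, ∑ τ', pe τ' m l * pd (m τ') τ' l := by
              refine Finset.sum_le_sum fun m _ => Finset.sum_le_sum fun τ' _ => ?_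
              exact mul_le_mul_of_nonneg_left (h1 m τ') (hpe0 _ _ _)
    have hfilter : ∀ (τ' : Fin d) (l : Fin L) (c : Fin k),
        ∑ n ∈ univ.filter (fun n : Fin k => n ≠ c), pd n τ' l = 1 - pd c τ' l := by
      intro τ' l c
      rw [Finset.filter_ne', Finset.sum_erase_eq_sub (mem_univ c), hpd1]
    have htotal : ∑ m : Fin d → Fin k, ∑ τ' : Fin d,
        ∑ n ∈ univ.filter (fun n : Fin k => n ≠ m τ'),
          ∑ l, μ l * pe τ' m l * pd n τ' l
        ≤ (k:ℝ)^d - 1 := by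
      have step : ∀ (m : Fin d → Fin k) (τ' : Fin d),
          ∑ n ∈ univ.filter (fun n : Fin k => n ≠ m τ'),
            ∑ l, μ l * pe τ' m l * pd n τ' l
          = ∑ l, μ l * pe τ' m l * (1 - pd (m τ') τ' l) := by
        intro m τ'
        rw [Finset.sum_comm]
        refine Finset.sum_congr rfl fun l _ => ?_
        rw [← Finset.mul_sum, hfilter]
      calc ∑ m : Fin d → Fin k, ∑ τ' : Fin d,
            ∑ n ∈ univ.filter (fun n : Fin k => n ≠ m τ'),
              ∑ l, μ l * pe τ' m l * pd n τ' l
          = ∑ m : Fin d → Fin k, ∑ τ' : Fin d, ∑ l,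
              μ l * pe τ' m l * (1 - pd (m τ') τ' l) := by
            exact Finset.sum_congr rfl fun m _ => Finset.sum_congr rfl fun τ' _ => step m τ'
        _ = ∑ m : Fin d → Fin k, ∑ l, ∑ τ' : Fin d,
              μ l * pe τ' m l * (1 - pd (m τ') τ' l) :=
            Finset.sum_congr rfl fun m _ => Finset.sum_comm
        _ = ∑ l, ∑ m : Fin d → Fin k, ∑ τ' : Fin d,
              μ l * pe τ' m l * (1 - pd (m τ') τ' l) := Finset.sum_comm
        _ = ∑ l, μ l * ((∑ m : Fin d → Fin k, ∑ τ', pe τ' m l)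
              - ∑ m : Fin d → Fin k, ∑ τ', pe τ' m l * pd (m τ') τ' l) := by
            refine Finset.sum_congr rfl fun l _ => ?_
            rw [mul_sub, Finset.mul_sum, Finset.mul_sum, ← Finset.sum_sub_distrib]
            refine Finset.sum_congr rfl fun m _ => ?_
            rw [Finset.mul_sum, Finset.mul_sum, ← Finset.sum_sub_distrib]
            refine Finset.sum_congr rfl fun τ' _ => ?_
            ring
        _ ≤ ∑ l, μ l * ((k:ℝ)^d - 1) := by
            refine Finset.sum_le_sum fun l _ => ?_
            apply mul_le_mul_of_nonneg_left _ (hμ0 l)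
            have hs : ∑ m : Fin d → Fin k, ∑ τ', pe τ' m l = (k:ℝ)^d := by
              simp only [hpe1]
              rw [Finset.sum_const, Finset.card_univ, hcard, nsmul_eq_mul]
              push_cast; ring
            rw [hs]
            linarith [key l]
        _ = (k:ℝ)^d - 1 := by rw [← Finset.sum_mul, hμ1, one_mul]
    unfold CSPayoff
    calc (1 / (k : ℝ) ^ d) * ∑ m : Fin d → Fin k, ∑ τ' : Fin d,
            ∑ n ∈ univ.filter (fun n : Fin k => n ≠ m τ'),
              ∑ l, μ l * pe τ' m l * pd n τ' l
        ≤ (1 / (k : ℝ) ^ d) * ((k:ℝ)^d - 1) := by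
          apply mul_le_mul_of_nonneg_left htotal (by positivity)
      _ = 1 - 1 / (k : ℝ) ^ d := by field_simp
  · classical
    set e : Fin (k ^ d) ≃ (Fin d → Fin k) :=
      (Fintype.equivFinOfCardEq hcard).symm with he
    have hd0 : 0 < d := by omega
    set sel : (Fin d → Fin k) → Fin (k ^ d) → Fin d :=
      fun m l => if hh : ∃ τ', e l τ' ≠ m τ' then hh.choose else ⟨0, hd0⟩ with hsel
    refine ⟨k ^ d, fun _ => 1 / (k:ℝ)^d,
      fun τ' m l => if τ' = sel m l then 1 else 0,
      fun n τ' l => if n = e l τ' then 1 else 0,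
      fun l => by positivity, ?_, fun τ' m l => by positivity, ?_, fun n τ' l => by positivity, ?_, ?_⟩
    · rw [Finset.sum_const, Finset.card_univ, Fintype.card_fin, nsmul_eq_mul]
      push_cast; field_simp
    · intro m l; simp
    · intro τ' l; simp
    · unfold CSPayoff
      have hinner : ∀ (m : Fin d → Fin k) (l : Fin (k ^ d)) (τ' : Fin d),
          ∑ n ∈ univ.filter (fun n : Fin k => n ≠ m τ'),
            (if n = e l τ' then (1:ℝ) else 0) = if e l τ' ≠ m τ' then 1 else 0 := by
        intro m l τ'
        rw [Finset.filter_ne', Finset.sum_ite_eq']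
        simp [Finset.mem_erase]
      have hmid : ∀ (m : Fin d → Fin k) (l : Fin (k ^ d)),
          ∑ τ' : Fin d, (if τ' = sel m l then (1:ℝ) else 0) *
            (if e l τ' ≠ m τ' then 1 else 0)
          = if e l = m then 0 else 1 := by
        intro m l
        have : ∀ τ' : Fin d, (if τ' = sel m l then (1:ℝ) else 0) *
            (if e l τ' ≠ m τ' then 1 else 0)
            = if τ' = sel m l then (if e l τ' ≠ m τ' then (1:ℝ) else 0) else 0 := by
          intro τ'; split <;> simp
        rw [Finset.sum_congr rfl fun τ' _ => this τ', Finset.sum_ite_eq']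
        simp only [Finset.mem_univ, if_true]
        by_cases hm : e l = m
        · simp [hm]
        · have hh : ∃ τ', e l τ' ≠ m τ' := by
            by_contra hc
            push_neg at hc
            exact hm (funext hc)
          have hspec := hh.choose_spec
          have hval : sel m l = hh.choose := by
            simp only [hsel]; rw [dif_pos hh]
          rw [hval, if_pos hspec, if_neg hm]
      have hperm : ∀ m : Fin d → Fin k,
          ∑ τ' : Fin d, ∑ n ∈ univ.filter (fun n : Fin k => n ≠ m τ'),
            ∑ l : Fin (k ^ d), (1 / (k:ℝ)^d) *
              (if τ' = sel m l then (1:ℝ) else 0) * (if n = e l τ' then 1 else 0)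
          = 1 - 1 / (k:ℝ)^d := by
        intro m
        have step1 : ∀ τ' : Fin d,
            ∑ n ∈ univ.filter (fun n : Fin k => n ≠ m τ'),
              ∑ l : Fin (k ^ d), (1 / (k:ℝ)^d) *
                (if τ' = sel m l then (1:ℝ) else 0) * (if n = e l τ' then 1 else 0)
            = ∑ l : Fin (k ^ d), (1 / (k:ℝ)^d) *
                ((if τ' = sel m l then (1:ℝ) else 0) * (if e l τ' ≠ m τ' then 1 else 0)) := by
          intro τ'
          rw [Finset.sum_comm]
          refine Finset.sum_congr rfl fun l _ => ?_
          rw [← Finset.mul_sum, hinner m l τ', mul_assoc]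
        calc ∑ τ' : Fin d, ∑ n ∈ univ.filter (fun n : Fin k => n ≠ m τ'),
              ∑ l : Fin (k ^ d), (1 / (k:ℝ)^d) *
                (if τ' = sel m l then (1:ℝ) else 0) * (if n = e l τ' then 1 else 0)
            = ∑ τ' : Fin d, ∑ l : Fin (k ^ d), (1 / (k:ℝ)^d) *
                ((if τ' = sel m l then (1:ℝ) else 0) * (if e l τ' ≠ m τ' then 1 else 0)) := by
              exact Finset.sum_congr rfl fun τ' _ => step1 τ'
          _ = ∑ l : Fin (k ^ d), (1 / (k:ℝ)^d) * (if e l = m then 0 else 1) := by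
              rw [Finset.sum_comm]
              refine Finset.sum_congr rfl fun l _ => ?_
              rw [← Finset.mul_sum, hmid]
          _ = 1 - 1 / (k:ℝ)^d := by
              have h1 : ∑ l : Fin (k ^ d), (1 / (k:ℝ)^d) * (if e l = m then 0 else 1)
                  = ∑ l : Fin (k ^ d),
                    ((1 / (k:ℝ)^d) - (1 / (k:ℝ)^d) * (if l = e.symm m then 1 else 0)) := by
                refine Finset.sum_congr rfl fun l _ => ?_
                have hiff : e l = m ↔ l = e.symm m :=
                  ⟨fun h => by rw [← h]; simp, fun h => by rw [h]; simp⟩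
                by_cases hc : l = e.symm m
                · rw [if_pos (hiff.mpr hc), if_pos hc]; ring
                · rw [if_neg (fun hx => hc (hiff.mp hx)), if_neg hc]; ring
              rw [h1, Finset.sum_sub_distrib, ← Finset.mul_sum, Finset.sum_ite_eq']
              simp only [Finset.mem_univ, if_true, mul_one]
              rw [Finset.sum_const, Finset.card_univ, Fintype.card_fin, nsmul_eq_mul]
              push_cast
              field_simp
      rw [Finset.sum_congr rfl fun m _ => hperm m]
      rw [Finset.sum_const, Finset.card_univ, hcard, nsmul_eq_mul]
      push_cast
      field_simp
end

section
/- Property of correlations on a non-local facet (Lemma 2): Let P be a no-signalling correlation with Alice inputs Fin X, Bob inputs Fin Y, Alice outputs Fin A, Bob outputs Fin B, lying on a non-local facet, and let LB : Fin Y → Fin B be any function. Then there exists x ∈ Fin X such that for every a ∈ Fin A there exists y ∈ Fin Y with P x y a (LB y) = 0. -/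
/-!
If the claim failed, some local deterministic strategy `(LA, LB)` would have
`P x y (LA x) (LB y) > 0` for every pair of inputs. A small enough `p > 0` then leaves
`P - p • D` entrywise nonnegative, where `D` is the deterministic correlation of
`(LA, LB)`; since the no-signalling constraints are affine, `(P - p • D) / (1 - p)` is again a
no-signalling correlation, so `P` would not lie on a non-local facet.
-/

namespace Correlation

variable {ι κ α β : Type*}

section NoSignalling

variable [Fintype α] [Fintype β]

structure IsNoSignalling (P : ι → κ → α → β → ℝ) : Prop where
  nonneg : ∀ x y a b, 0 ≤ P x y a b
  sum_eq_one : ∀ x y, ∑ a, ∑ b, P x y a b = 1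
  sum_right_eq : ∀ x a y₁ y₂, ∑ b, P x y₁ a b = ∑ b, P x y₂ a b
  sum_left_eq : ∀ y b x₁ x₂, ∑ a, P x₁ y a b = ∑ a, P x₂ y a b

lemma IsNoSignalling.residual {P D : ι → κ → α → β → ℝ} (hP : IsNoSignalling P)
    (hD : IsNoSignalling D) {p : ℝ} (hp : p < 1) (hle : ∀ x y a b, p * D x y a b ≤ P x y a b) :
    IsNoSignalling fun x y a b => (P x y a b - p * D x y a b) / (1 - p) where
  nonneg x y a b := div_nonneg (sub_nonneg.2 (hle x y a b)) (by linarith)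
  sum_eq_one x y := by
    have hp' : 1 - p ≠ 0 := by linarith
    simp only [← Finset.sum_div, Finset.sum_sub_distrib, ← Finset.mul_sum, hP.sum_eq_one,
      hD.sum_eq_one, mul_one, div_self hp']
  sum_right_eq x a y₁ y₂ := by
    simp only [← Finset.sum_div, Finset.sum_sub_distrib, ← Finset.mul_sum,
      hP.sum_right_eq x a y₁ y₂, hD.sum_right_eq x a y₁ y₂]
  sum_left_eq y b x₁ x₂ := by
    simp only [← Finset.sum_div, Finset.sum_sub_distrib, ← Finset.mul_sum,
      hP.sum_left_eq y b x₁ x₂, hD.sum_left_eq y b x₁ x₂]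

end NoSignalling

section Deterministic

variable [DecidableEq α] [DecidableEq β]

def deterministic (LA : ι → α) (LB : κ → β) : ι → κ → α → β → ℝ :=
  fun x y a b => if a = LA x ∧ b = LB y then 1 else 0

lemma sum_deterministic_right [Fintype β] (LA : ι → α) (LB : κ → β) (x : ι) (y : κ) (a : α) :
    ∑ b, deterministic LA LB x y a b = if a = LA x then 1 else 0 := by
  by_cases h : a = LA x <;> simp [deterministic, h]

lemma sum_deterministic_left [Fintype α] (LA : ι → α) (LB : κ → β) (x : ι) (y : κ) (b : β) :
    ∑ a, deterministic LA LB x y a b = if b = LB y then 1 else 0 := by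
  by_cases h : b = LB y <;> simp [deterministic, h]

lemma isNoSignalling_deterministic [Fintype α] [Fintype β] (LA : ι → α) (LB : κ → β) :
    IsNoSignalling (deterministic LA LB) where
  nonneg x y a b := by unfold deterministic; split_ifs <;> norm_num
  sum_eq_one x y := by simp [sum_deterministic_right]
  sum_right_eq x a y₁ y₂ := by simp only [sum_deterministic_right]
  sum_left_eq y b x₁ x₂ := by simp only [sum_deterministic_left]

lemma smul_deterministic_le {P : ι → κ → α → β → ℝ} (hP0 : ∀ x y a b, 0 ≤ P x y a b)
    {LA : ι → α} {LB : κ → β} {p : ℝ} (hp : ∀ x y, p ≤ P x y (LA x) (LB y)) (x : ι) (y : κ)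
    (a : α) (b : β) : p * deterministic LA LB x y a b ≤ P x y a b := by
  unfold deterministic
  split_ifs with h
  · obtain ⟨rfl, rfl⟩ := h
    simpa using hp x y
  · simpa using hP0 x y a b

lemma exists_decomposition_of_forall_pos [Finite ι] [Finite κ] [Fintype α] [Fintype β]
    {P : ι → κ → α → β → ℝ} (hP : IsNoSignalling P) {LA : ι → α} {LB : κ → β}
    (hpos : ∀ x y, 0 < P x y (LA x) (LB y)) :
    ∃ (p : ℝ) (Q : ι → κ → α → β → ℝ), 0 < p ∧ p ≤ 1 ∧ IsNoSignalling Q ∧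
      ∀ x y a b, P x y a b = p * deterministic LA LB x y a b + (1 - p) * Q x y a b := by
  obtain ⟨ε, hε, hεP⟩ :=
    Pi.exists_forall_pos_add_lt (x := (0 : ι × κ → ℝ)) fun q => hpos q.1 q.2
  set p := min ε (1 / 2)
  have hp1 : p < 1 := (min_le_right _ _).trans_lt (by norm_num)
  have hle : ∀ x y, p ≤ P x y (LA x) (LB y) := fun x y =>
    (min_le_left _ _).trans (by simpa using (hεP (x, y)).le)
  refine ⟨p, _, lt_min hε (by norm_num), hp1.le,
    hP.residual (isNoSignalling_deterministic LA LB) hp1 (smul_deterministic_le hP.nonneg hle),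
    fun x y a b => ?_⟩
  have : 1 - p ≠ 0 := by linarith
  field_simp
  ring

end Deterministic

end Correlation

open Correlation in
/-- Property of correlations on a non-local facet (Lemma 2): for every local
deterministic assignment `LB` of Bob, there is an Alice input `x` such that for every
Alice output `a` some Bob input `y` has `P x y a (LB y) = 0`. -/
theorem nonlocal_facet_property
    (X Y A B : ℕ)
    (P : Fin X → Fin Y → Fin A → Fin B → ℝ)
    (hP0 : ∀ x y a b, 0 ≤ P x y a b)
    (hP1 : ∀ x y, ∑ a : Fin A, ∑ b : Fin B, P x y a b = 1)
    (hNSA : ∀ x a y₁ y₂, ∑ b : Fin B, P x y₁ a b = ∑ b : Fin B, P x y₂ a b)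
    (hNSB : ∀ y b x₁ x₂, ∑ a : Fin A, P x₁ y a b = ∑ a : Fin A, P x₂ y a b)
    (hfacet : ∀ (LA : Fin X → Fin A) (LB : Fin Y → Fin B),
      ¬ ∃ (p : ℝ) (Q : Fin X → Fin Y → Fin A → Fin B → ℝ),
        0 < p ∧ p ≤ 1 ∧
        (∀ x y a b, 0 ≤ Q x y a b) ∧
        (∀ x y, ∑ a : Fin A, ∑ b : Fin B, Q x y a b = 1) ∧
        (∀ x a y₁ y₂, ∑ b : Fin B, Q x y₁ a b = ∑ b : Fin B, Q x y₂ a b) ∧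
        (∀ y b x₁ x₂, ∑ a : Fin A, Q x₁ y a b = ∑ a : Fin A, Q x₂ y a b) ∧
        (∀ x y a b, P x y a b =
          p * (if a = LA x ∧ b = LB y then 1 else 0) + (1 - p) * Q x y a b))
    (LB : Fin Y → Fin B) :
    ∃ x : Fin X, ∀ a : Fin A, ∃ y : Fin Y, P x y a (LB y) = 0 := by
  by_contra! hcon
  choose LA hLA using hcon
  have hpos : ∀ x y, 0 < P x y (LA x) (LB y) := fun x y => (hP0 _ _ _ _).lt_of_ne' (hLA x y)
  obtain ⟨p, Q, hp0, hp1, hQ, hPQ⟩ :=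
    exists_decomposition_of_forall_pos ⟨hP0, hP1, hNSA, hNSB⟩ hpos
  exact hfacet LA LB
    ⟨p, Q, hp0, hp1, hQ.nonneg, hQ.sum_eq_one, hQ.sum_right_eq, hQ.sum_left_eq, hPQ⟩
end

section
/- Extraction of a deterministic local component (key step in the proof of Lemma 2): Let P be a no-signalling correlation with Alice inputs Fin X, Bob inputs Fin Y, Alice outputs Fin A, Bob outputs Fin B, and let LA : Fin X → Fin A and LB : Fin Y → Fin B be functions such that P x y (LA x) (LB y) > 0 for all x ∈ Fin X and y ∈ Fin Y. Then there exist p ∈ (0,1] and a no-signalling correlation Q such that P x y a b = p·(if a = LA x ∧ b = LB y then 1 else 0) + (1-p)·Q x y a b for all x,y,a,b. -/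
open Finset

/-- Extraction of a deterministic local component (key step in the proof of Lemma 2):
if `P x y (LA x) (LB y) > 0` for all `x, y`, then `P` admits a convex decomposition
with positive weight on the deterministic local point determined by `LA, LB`. -/
theorem deterministic_component_extraction
    (X Y A B : ℕ)
    (P : Fin X → Fin Y → Fin A → Fin B → ℝ)
    (hP0 : ∀ x y a b, 0 ≤ P x y a b)
    (hP1 : ∀ x y, ∑ a : Fin A, ∑ b : Fin B, P x y a b = 1)
    (hNSA : ∀ x a y₁ y₂, ∑ b : Fin B, P x y₁ a b = ∑ b : Fin B, P x y₂ a b)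
    (hNSB : ∀ y b x₁ x₂, ∑ a : Fin A, P x₁ y a b = ∑ a : Fin A, P x₂ y a b)
    (LA : Fin X → Fin A) (LB : Fin Y → Fin B)
    (hpos : ∀ x y, 0 < P x y (LA x) (LB y)) :
    ∃ (p : ℝ) (Q : Fin X → Fin Y → Fin A → Fin B → ℝ),
      0 < p ∧ p ≤ 1 ∧
      (∀ x y a b, 0 ≤ Q x y a b) ∧
      (∀ x y, ∑ a : Fin A, ∑ b : Fin B, Q x y a b = 1) ∧
      (∀ x a y₁ y₂, ∑ b : Fin B, Q x y₁ a b = ∑ b : Fin B, Q x y₂ a b) ∧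
      (∀ y b x₁ x₂, ∑ a : Fin A, Q x₁ y a b = ∑ a : Fin A, Q x₂ y a b) ∧
      (∀ x y a b, P x y a b =
        p * (if a = LA x ∧ b = LB y then 1 else 0) + (1 - p) * Q x y a b) := by
  by_cases hXY : X = 0 ∨ Y = 0
  · refine ⟨1/2, P, by norm_num, by norm_num, ?_, ?_, ?_, ?_, ?_⟩ <;>
      (intros; exfalso; rcases hXY with h | h <;> subst h <;> exact Fin.elim0 ‹Fin 0›)
  push_neg at hXY
  haveI : NeZero X := ⟨hXY.1⟩
  haveI : NeZero Y := ⟨hXY.2⟩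
  have hne : (Finset.univ : Finset (Fin X × Fin Y)).Nonempty := univ_nonempty
  set p0 : ℝ := Finset.inf' univ hne (fun z => P z.1 z.2 (LA z.1) (LB z.2)) with hp0def
  have hp0pos : 0 < p0 := by
    rw [hp0def, Finset.lt_inf'_iff]
    exact fun z _ => hpos z.1 z.2
  have hp0le : ∀ x y, p0 ≤ P x y (LA x) (LB y) := fun x y =>
    Finset.inf'_le _ (mem_univ (x, y))
  -- each entry is at most 1
  have hle1 : ∀ x y a b, P x y a b ≤ 1 := by
    intro x y a b
    have h1 : P x y a b ≤ ∑ b' : Fin B, P x y a b' :=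
      Finset.single_le_sum (fun b' _ => hP0 x y a b') (mem_univ b)
    have h2 : ∑ b' : Fin B, P x y a b' ≤ ∑ a' : Fin A, ∑ b' : Fin B, P x y a' b' :=
      Finset.single_le_sum (fun a' _ => Finset.sum_nonneg fun b' _ => hP0 x y a' b')
        (mem_univ a)
    calc P x y a b ≤ _ := h1
      _ ≤ _ := h2
      _ = 1 := hP1 x y
  have hp0le1 : p0 ≤ 1 := le_trans (hp0le ⟨0, Nat.pos_of_ne_zero hXY.1⟩
    ⟨0, Nat.pos_of_ne_zero hXY.2⟩) (hle1 _ _ _ _)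
  set p : ℝ := p0 / 2 with hpdef
  have hppos : 0 < p := by positivity
  have hplt1 : p < 1 := by rw [hpdef]; linarith
  have h1p : 0 < 1 - p := by linarith
  have hple : ∀ x y, p ≤ P x y (LA x) (LB y) := fun x y => by
    have := hp0le x y; rw [hpdef]; linarith
  set D : Fin X → Fin Y → Fin A → Fin B → ℝ :=
    fun x y a b => if a = LA x ∧ b = LB y then 1 else 0 with hDdef
  -- sum over b of D
  have hDsumB : ∀ x y a, ∑ b : Fin B, D x y a b = if a = LA x then 1 else 0 := by
    intro x y a
    by_cases h : a = LA x <;> simp [hDdef, h]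
  have hDsumA : ∀ x y b, ∑ a : Fin A, D x y a b = if b = LB y then 1 else 0 := by
    intro x y b
    by_cases h : b = LB y <;> simp [hDdef, h, and_comm]
  have hDsum : ∀ x y, ∑ a : Fin A, ∑ b : Fin B, D x y a b = 1 := by
    intro x y
    simp [hDsumB]
  refine ⟨p, fun x y a b => (P x y a b - p * D x y a b) / (1 - p),
    hppos, le_of_lt hplt1, ?_, ?_, ?_, ?_, ?_⟩
  · intro x y a b
    apply div_nonneg _ (le_of_lt h1p)
    by_cases h : a = LA x ∧ b = LB y
    · obtain ⟨ha, hb⟩ := h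
      subst ha; subst hb
      have hD1 : D x y (LA x) (LB y) = 1 := by simp [hDdef]
      rw [hD1, mul_one]
      linarith [hple x y]
    · simp only [hDdef, if_neg h, mul_zero, sub_zero]
      exact hP0 x y a b
  · intro x y
    dsimp only
    simp_rw [← Finset.sum_div, Finset.sum_sub_distrib, ← Finset.mul_sum]
    rw [hP1 x y, hDsum x y]
    field_simp
  · intro x a y₁ y₂
    dsimp only
    simp_rw [← Finset.sum_div, Finset.sum_sub_distrib, ← Finset.mul_sum]
    rw [hNSA x a y₁ y₂, hDsumB x y₁ a, hDsumB x y₂ a]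
  · intro y b x₁ x₂
    dsimp only
    simp_rw [← Finset.sum_div, Finset.sum_sub_distrib, ← Finset.mul_sum]
    rw [hNSB y b x₁ x₂, hDsumA x₁ y b, hDsumA x₂ y b]
  · intro x y a b
    dsimp only
    rw [mul_comm (1 - p), div_mul_cancel₀ _ (ne_of_gt h1p)]
    show P x y a b = p * D x y a b + (P x y a b - p * D x y a b)
    ring
end

section
/- Non-local facet correlations win CS[d,k] perfectly (Theorem 3): Let d, k ≥ 2 and let P be a no-signalling correlation with Alice inputs Fin X, Alice outputs Fin A, Bob inputs Fin d, Bob outputs Fin k, lying on a non-local facet. Then there exists a P-assisted wire-reading strategy for the task CS[d,k] whose payoff satisfies S_W(𝒩) = 1. -/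
open Finset

/-- Non-local facet correlations win CS[d,k] perfectly (Theorem 3). -/
theorem nonlocal_facet_wins_CS
    (d k X A : ℕ) (hd : 2 ≤ d) (hk : 2 ≤ k)
    (P : Fin X → Fin d → Fin A → Fin k → ℝ)
    (hP0 : ∀ x y a b, 0 ≤ P x y a b)
    (hP1 : ∀ x y, ∑ a : Fin A, ∑ b : Fin k, P x y a b = 1)
    (hNSA : ∀ x a y₁ y₂, ∑ b : Fin k, P x y₁ a b = ∑ b : Fin k, P x y₂ a b)
    (hNSB : ∀ y b x₁ x₂, ∑ a : Fin A, P x₁ y a b = ∑ a : Fin A, P x₂ y a b)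
    (hfacet : ∀ (LA : Fin X → Fin A) (LB : Fin d → Fin k),
      ¬ ∃ (p : ℝ) (Q : Fin X → Fin d → Fin A → Fin k → ℝ),
        0 < p ∧ p ≤ 1 ∧
        (∀ x y a b, 0 ≤ Q x y a b) ∧
        (∀ x y, ∑ a : Fin A, ∑ b : Fin k, Q x y a b = 1) ∧
        (∀ x a y₁ y₂, ∑ b : Fin k, Q x y₁ a b = ∑ b : Fin k, Q x y₂ a b) ∧
        (∀ y b x₁ x₂, ∑ a : Fin A, Q x₁ y a b = ∑ a : Fin A, Q x₂ y a b) ∧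
        (∀ x y a b, P x y a b =
          p * (if a = LA x ∧ b = LB y then 1 else 0) + (1 - p) * Q x y a b)) :
    ∃ (px : Fin X → (Fin d → Fin k) → ℝ)
      (pe : Fin d → Fin A → (Fin d → Fin k) → ℝ)
      (py : Fin d → Fin d → ℝ)
      (pd : Fin k → Fin d → Fin k → ℝ),
      (∀ x m, 0 ≤ px x m) ∧ (∀ m, ∑ x : Fin X, px x m = 1) ∧
      (∀ τ' a m, 0 ≤ pe τ' a m) ∧ (∀ a m, ∑ τ' : Fin d, pe τ' a m = 1) ∧
      (∀ y τ', 0 ≤ py y τ') ∧ (∀ τ', ∑ y : Fin d, py y τ' = 1) ∧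
      (∀ n τ' b, 0 ≤ pd n τ' b) ∧ (∀ τ' b, ∑ n : Fin k, pd n τ' b = 1) ∧
      CSPayoff d k (fun τ' n m =>
        ∑ x : Fin X, ∑ a : Fin A, ∑ y : Fin d, ∑ b : Fin k,
          px x m * pe τ' a m * py y τ' * P x y a b * pd n τ' b) = 1 := by
  have hd0 : 0 < d := by omega
  have hk0 : 0 < k := by omega
  -- First dispose of the degenerate case X = 0, where the facet condition is contradictory.
  rcases Nat.eq_zero_or_pos X with hX | hX
  · exact absurd
      ⟨1, P, one_pos, le_rfl, hP0, hP1, hNSA, hNSB, fun x => absurd x.isLt (by omega)⟩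
      (hfacet (fun x => absurd x.isLt (by omega)) (fun _ => ⟨0, hk0⟩))
  -- Key lemma: for every message m there is an Alice input x such that for every box
  -- output a there is a position y with P x y a (m y) = 0.
  have L : ∀ m : Fin d → Fin k, ∃ x : Fin X, ∀ a : Fin A, ∃ y : Fin d,
      P x y a (m y) = 0 := by
    intro m
    by_contra hc
    push_neg at hc
    choose LA hLA using hc
    have hpos : ∀ x y, 0 < P x y (LA x) (m y) := fun x y =>
      lt_of_le_of_ne (hP0 _ _ _ _) (Ne.symm (hLA x y))
    obtain ⟨q, -, hqmin⟩ := Finset.exists_min_image (Finset.univ : Finset (Fin X × Fin d))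
      (fun q => P q.1 q.2 (LA q.1) (m q.2)) ⟨(⟨0, hX⟩, ⟨0, hd0⟩), Finset.mem_univ _⟩
    set p0 : ℝ := P q.1 q.2 (LA q.1) (m q.2) with hp0def
    have hp0pos : 0 < p0 := hpos _ _
    have hple : ∀ x y, p0 ≤ P x y (LA x) (m y) := fun x y => hqmin (x, y) (Finset.mem_univ _)
    have hp0le1 : p0 ≤ 1 := by
      have h1 : P q.1 q.2 (LA q.1) (m q.2) ≤ ∑ b : Fin k, P q.1 q.2 (LA q.1) b :=
        Finset.single_le_sum (f := fun b : Fin k => P q.1 q.2 (LA q.1) b)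
          (fun b _ => hP0 _ _ _ _) (Finset.mem_univ (m q.2))
      have h2 : (∑ b : Fin k, P q.1 q.2 (LA q.1) b) ≤
          ∑ a : Fin A, ∑ b : Fin k, P q.1 q.2 a b :=
        Finset.single_le_sum (f := fun a : Fin A => ∑ b : Fin k, P q.1 q.2 a b)
          (fun a _ => Finset.sum_nonneg fun b _ => hP0 _ _ _ _) (Finset.mem_univ (LA q.1))
      calc p0 ≤ ∑ b : Fin k, P q.1 q.2 (LA q.1) b := h1
        _ ≤ ∑ a : Fin A, ∑ b : Fin k, P q.1 q.2 a b := h2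
        _ = 1 := hP1 _ _
    set p : ℝ := p0 / 2 with hpdef
    have hp_pos : 0 < p := by positivity
    have hp_lt1 : p < 1 := by rw [hpdef]; linarith
    have h1p : (0:ℝ) < 1 - p := by linarith
    have hsumb : ∀ (x : Fin X) (y : Fin d) (a : Fin A),
        (∑ b : Fin k, (if a = LA x ∧ b = m y then (1:ℝ) else 0)) =
          if a = LA x then 1 else 0 := by
      intro x y a
      by_cases h : a = LA x <;> simp [h]
    have hsuma : ∀ (x : Fin X) (y : Fin d) (b : Fin k),
        (∑ a : Fin A, (if a = LA x ∧ b = m y then (1:ℝ) else 0)) =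
          if b = m y then 1 else 0 := by
      intro x y b
      by_cases h : b = m y <;> simp [h, and_comm]
    apply hfacet LA m
    refine ⟨p, fun x y a b =>
      (P x y a b - p * (if a = LA x ∧ b = m y then 1 else 0)) / (1 - p),
      hp_pos, le_of_lt hp_lt1, ?_, ?_, ?_, ?_, ?_⟩
    · intro x y a b
      apply div_nonneg _ h1p.le
      by_cases h : a = LA x ∧ b = m y
      · obtain ⟨ha, hb⟩ := h
        subst ha; subst hb
        have h2 : p ≤ P x y (LA x) (m y) := by
          have := hple x y
          rw [hpdef]; linarith
        rw [if_pos ⟨rfl, rfl⟩]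
        linarith
      · rw [if_neg h]
        have := hP0 x y a b
        linarith
    · intro x y
      have e1 : (∑ a : Fin A, ∑ b : Fin k,
          (P x y a b - p * (if a = LA x ∧ b = m y then 1 else 0)) / (1 - p)) =
          ((∑ a : Fin A, ∑ b : Fin k, P x y a b) -
            p * (∑ a : Fin A, ∑ b : Fin k,
              (if a = LA x ∧ b = m y then (1:ℝ) else 0))) / (1 - p) := by
        simp only [← Finset.sum_div, Finset.sum_sub_distrib, ← Finset.mul_sum]
      rw [e1, hP1]
      have e2 : (∑ a : Fin A, ∑ b : Fin k,
          (if a = LA x ∧ b = m y then (1:ℝ) else 0)) = 1 := by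
        simp only [hsumb]
        simp
      rw [e2, mul_one]
      field_simp
    · intro x a y₁ y₂
      rw [← Finset.sum_div, ← Finset.sum_div, Finset.sum_sub_distrib,
        Finset.sum_sub_distrib, ← Finset.mul_sum, ← Finset.mul_sum,
        hsumb, hsumb, hNSA x a y₁ y₂]
    · intro y b x₁ x₂
      rw [← Finset.sum_div, ← Finset.sum_div, Finset.sum_sub_distrib,
        Finset.sum_sub_distrib, ← Finset.mul_sum, ← Finset.mul_sum,
        hsuma, hsuma, hNSB y b x₁ x₂]
    · intro x y a b
      have e : (1 - p) * ((P x y a b - p * (if a = LA x ∧ b = m y then 1 else 0)) / (1 - p))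
          = P x y a b - p * (if a = LA x ∧ b = m y then 1 else 0) := by
        field_simp
      rw [e]; ring
  -- Choice of the deterministic strategy.
  choose f hf using L
  choose g hg using hf
  refine ⟨fun x m => if x = f m then 1 else 0,
    fun τ' a m => if τ' = g m a then 1 else 0,
    fun y τ' => if y = τ' then 1 else 0,
    fun n τ' b => if n = b then 1 else 0,
    ?_, ?_, ?_, ?_, ?_, ?_, ?_, ?_, ?_⟩
  · intro x m; dsimp only; split <;> norm_num
  · intro m; simp
  · intro τ' a m; dsimp only; split <;> norm_num
  · intro a m; simp
  · intro y τ'; dsimp only; split <;> norm_num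
  · intro τ'; simp
  · intro n τ' b; dsimp only; split <;> norm_num
  · intro τ' b; simp
  -- The payoff computation.
  have hN : ∀ (m : Fin d → Fin k) (τ' : Fin d) (n : Fin k),
      (∑ x : Fin X, ∑ a : Fin A, ∑ y : Fin d, ∑ b : Fin k,
        (if x = f m then (1:ℝ) else 0) * (if τ' = g m a then 1 else 0) *
          (if y = τ' then 1 else 0) * P x y a b * (if n = b then 1 else 0)) =
      ∑ a : Fin A, (if τ' = g m a then (1:ℝ) else 0) * P (f m) τ' a n := by
    intro m τ' n
    rw [Finset.sum_eq_single_of_mem (f m) (Finset.mem_univ _)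
      (fun x _ hx => by simp [hx])]
    refine Finset.sum_congr rfl fun a _ => ?_
    rw [Finset.sum_eq_single_of_mem τ' (Finset.mem_univ _)
      (fun y _ hy => by simp [hy])]
    rw [Finset.sum_eq_single_of_mem n (Finset.mem_univ _)
      (fun b _ hb => by simp [Ne.symm hb])]
    simp
  have key : ∀ m : Fin d → Fin k,
      (∑ τ' : Fin d, ∑ n ∈ Finset.univ.filter (fun n : Fin k => n ≠ m τ'),
        ∑ x : Fin X, ∑ a : Fin A, ∑ y : Fin d, ∑ b : Fin k,
          (if x = f m then (1:ℝ) else 0) * (if τ' = g m a then 1 else 0) *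
            (if y = τ' then 1 else 0) * P x y a b * (if n = b then 1 else 0)) = 1 := by
    intro m
    calc (∑ τ' : Fin d, ∑ n ∈ Finset.univ.filter (fun n : Fin k => n ≠ m τ'),
          ∑ x : Fin X, ∑ a : Fin A, ∑ y : Fin d, ∑ b : Fin k,
            (if x = f m then (1:ℝ) else 0) * (if τ' = g m a then 1 else 0) *
              (if y = τ' then 1 else 0) * P x y a b * (if n = b then 1 else 0))
        = ∑ τ' : Fin d, ∑ n ∈ Finset.univ.filter (fun n : Fin k => n ≠ m τ'),
            ∑ a : Fin A, (if τ' = g m a then (1:ℝ) else 0) * P (f m) τ' a n := by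
          exact Finset.sum_congr rfl fun τ' _ =>
            Finset.sum_congr rfl fun n _ => hN m τ' n
      _ = ∑ τ' : Fin d, ∑ a : Fin A,
            ∑ n ∈ Finset.univ.filter (fun n : Fin k => n ≠ m τ'),
              (if τ' = g m a then (1:ℝ) else 0) * P (f m) τ' a n := by
          exact Finset.sum_congr rfl fun τ' _ => Finset.sum_comm
      _ = ∑ a : Fin A, ∑ τ' : Fin d,
            ∑ n ∈ Finset.univ.filter (fun n : Fin k => n ≠ m τ'),
              (if τ' = g m a then (1:ℝ) else 0) * P (f m) τ' a n := Finset.sum_comm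
      _ = ∑ a : Fin A, ∑ τ' : Fin d,
            (if τ' = g m a then
              (∑ n ∈ Finset.univ.filter (fun n : Fin k => n ≠ m τ'), P (f m) τ' a n)
            else 0) := by
          refine Finset.sum_congr rfl fun a _ => Finset.sum_congr rfl fun τ' _ => ?_
          rw [← Finset.mul_sum]
          split <;> simp
      _ = ∑ a : Fin A,
            ∑ n ∈ Finset.univ.filter (fun n : Fin k => n ≠ m (g m a)),
              P (f m) (g m a) a n := by
          refine Finset.sum_congr rfl fun a _ => ?_
          rw [Finset.sum_ite_eq' Finset.univ (g m a)]
          simp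
      _ = ∑ a : Fin A, ∑ n : Fin k, P (f m) (g m a) a n := by
          refine Finset.sum_congr rfl fun a _ => ?_
          rw [Finset.filter_ne', Finset.sum_erase _ (hg m a)]
      _ = ∑ a : Fin A, ∑ n : Fin k, P (f m) ⟨0, hd0⟩ a n := by
          exact Finset.sum_congr rfl fun a _ => hNSA (f m) a (g m a) ⟨0, hd0⟩
      _ = 1 := hP1 (f m) ⟨0, hd0⟩
  simp only [CSPayoff]
  simp only [key]
  rw [Finset.sum_const, Finset.card_univ, Fintype.card_fun, Fintype.card_fin,
    Fintype.card_fin, nsmul_eq_mul, mul_one, Nat.cast_pow, one_div,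
    inv_mul_cancel₀]
  positivity
end

section
/- Noise robustness for CS[d,k] (Corollary 1): Let d, k ≥ 2 and let P_NL be a no-signalling correlation with Alice inputs Fin X, Alice outputs Fin A, Bob inputs Fin d, Bob outputs Fin k, lying on a non-local facet. Let P_WN denote the white-noise correlation P_WN x y a b = 1/(A·k). If 1 - 1/k^{d-1} < p ≤ 1, then there exists a (p·P_NL + (1-p)·P_WN)-assisted wire-reading strategy for CS[d,k] whose payoff satisfies S_W(𝒩) > 1 - 1/k^d (the shared-randomness bound). -/
/-!
If a no-signalling correlation on a non-local facet gave positive probability to the outputs of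
some deterministic local box at every input pair, a small multiple of that box could be split off
from it. So for every `m : Fin d → Fin k` Alice has an input `x` such that for each of her outputs
`a` some Bob input `τ` has `P(a, m τ | x, τ) = 0`. She sends that `τ`, and Bob feeds it to the box
and announces his output: it equals `m τ` with probability `0` under `P` and `1/k` under white
noise. The payoff is `1 - (1 - p)/k`, which beats `1 - 1/k^d` as soon as `1 - p < 1/k^(d-1)`.
-/

open Finset

section NoSignalling

variable {ι κ α β : Type*} [Fintype α] [Fintype β]

/-- `P x y a b = P(a, b | x, y)`: Alice's input and output are `x`, `a`, Bob's are `y`, `b`. -/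
structure IsNoSignalling (P : ι → κ → α → β → ℝ) : Prop where
  nonneg : ∀ x y a b, 0 ≤ P x y a b
  sum_eq_one : ∀ x y, ∑ a, ∑ b, P x y a b = 1
  marginal_fst_eq : ∀ x a y₁ y₂, ∑ b, P x y₁ a b = ∑ b, P x y₂ a b
  marginal_snd_eq : ∀ y b x₁ x₂, ∑ a, P x₁ y a b = ∑ a, P x₂ y a b

def deterministicBox [DecidableEq α] [DecidableEq β] (LA : ι → α) (LB : κ → β) :
    ι → κ → α → β → ℝ :=
  fun x y a b => if a = LA x ∧ b = LB y then 1 else 0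

def IsOnNonlocalFacet [DecidableEq α] [DecidableEq β] (P : ι → κ → α → β → ℝ) : Prop :=
  ∀ (LA : ι → α) (LB : κ → β), ¬ ∃ (q : ℝ) (Q : ι → κ → α → β → ℝ),
    0 < q ∧ q ≤ 1 ∧ IsNoSignalling Q ∧
    ∀ x y a b, P x y a b = q * deterministicBox LA LB x y a b + (1 - q) * Q x y a b

theorem isNoSignalling_deterministicBox [DecidableEq α] [DecidableEq β]
    (LA : ι → α) (LB : κ → β) : IsNoSignalling (deterministicBox LA LB) where
  nonneg x y a b := by unfold deterministicBox; split_ifs <;> norm_num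
  sum_eq_one x y := by simp [deterministicBox, ite_and]
  marginal_fst_eq x a y₁ y₂ := by simp [deterministicBox, ite_and]
  marginal_snd_eq y b x₁ x₂ := by simp [deterministicBox, ite_and]

theorem IsNoSignalling.sub_smul_div {P D : ι → κ → α → β → ℝ} (hP : IsNoSignalling P)
    (hD : IsNoSignalling D) {q : ℝ} (hq : q < 1) (hle : ∀ x y a b, q * D x y a b ≤ P x y a b) :
    IsNoSignalling fun x y a b => (P x y a b - q * D x y a b) / (1 - q) where
  nonneg x y a b := div_nonneg (sub_nonneg.2 (hle x y a b)) (by linarith)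
  sum_eq_one x y := by
    simp only [← sum_div, sum_sub_distrib, ← mul_sum, hP.sum_eq_one, hD.sum_eq_one, mul_one]
    exact div_self (by linarith)
  marginal_fst_eq x a y₁ y₂ := by
    simp only [← sum_div, sum_sub_distrib, ← mul_sum, hP.marginal_fst_eq x a y₁ y₂,
      hD.marginal_fst_eq x a y₁ y₂]
  marginal_snd_eq y b x₁ x₂ := by
    simp only [← sum_div, sum_sub_distrib, ← mul_sum, hP.marginal_snd_eq y b x₁ x₂,
      hD.marginal_snd_eq y b x₁ x₂]

theorem exists_pos_forall_le_of_forall_pos {γ : Type*} [Finite γ] {f : γ → ℝ}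
    (hf : ∀ i, 0 < f i) : ∃ ε > 0, ∀ i, ε ≤ f i := by
  rcases isEmpty_or_nonempty γ with hγ | hγ
  · exact ⟨1, one_pos, isEmptyElim⟩
  · obtain ⟨i, hi⟩ := Finite.exists_min f
    exact ⟨f i, hf i, hi⟩

theorem IsNoSignalling.exists_decomposition_deterministicBox [Finite ι] [Finite κ]
    [DecidableEq α] [DecidableEq β]
    {P : ι → κ → α → β → ℝ} (hP : IsNoSignalling P) (LA : ι → α) (LB : κ → β)
    (hpos : ∀ x y, 0 < P x y (LA x) (LB y)) :
    ∃ (q : ℝ) (Q : ι → κ → α → β → ℝ), 0 < q ∧ q ≤ 1 ∧ IsNoSignalling Q ∧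
      ∀ x y a b, P x y a b = q * deterministicBox LA LB x y a b + (1 - q) * Q x y a b := by
  obtain ⟨ε, hε, hεle⟩ :=
    exists_pos_forall_le_of_forall_pos (f := fun xy : ι × κ => P xy.1 xy.2 (LA xy.1) (LB xy.2))
      fun xy => hpos xy.1 xy.2
  set q := min ε (1 / 2)
  have hq1 : q < 1 := (min_le_right _ _).trans_lt (by norm_num)
  have hle : ∀ x y a b, q * deterministicBox LA LB x y a b ≤ P x y a b := by
    intro x y a b
    unfold deterministicBox
    split_ifs with h
    · obtain ⟨rfl, rfl⟩ := h
      rw [mul_one]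
      exact (min_le_left _ _).trans (hεle (x, y))
    · simpa using hP.nonneg x y a b
  refine ⟨q, _, lt_min hε (by norm_num), hq1.le,
    hP.sub_smul_div (isNoSignalling_deterministicBox LA LB) hq1 hle, fun x y a b => ?_⟩
  field_simp [(sub_pos.2 hq1).ne']
  ring

theorem IsNoSignalling.exists_eq_zero_of_isOnNonlocalFacet [Finite ι] [Finite κ]
    [DecidableEq α] [DecidableEq β]
    {P : ι → κ → α → β → ℝ} (hP : IsNoSignalling P) (hF : IsOnNonlocalFacet P)
    (LA : ι → α) (LB : κ → β) : ∃ x y, P x y (LA x) (LB y) = 0 := by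
  by_contra! h
  exact hF LA LB <| hP.exists_decomposition_deterministicBox LA LB fun x y =>
    (hP.nonneg x y _ _).lt_of_ne' (h x y)

theorem IsNoSignalling.exists_forall_exists_eq_zero [Finite ι] [Finite κ]
    [DecidableEq α] [DecidableEq β]
    {P : ι → κ → α → β → ℝ} (hP : IsNoSignalling P) (hF : IsOnNonlocalFacet P)
    (m : κ → β) : ∃ x, ∀ a, ∃ y, P x y a (m y) = 0 := by
  by_contra! h
  choose LA hLA using h
  obtain ⟨x, y, hxy⟩ := hP.exists_eq_zero_of_isOnNonlocalFacet hF LA m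
  exact hLA x y hxy

theorem IsNoSignalling.sum_sum_comp_eq_one [Nonempty κ] {P : ι → κ → α → β → ℝ}
    (hP : IsNoSignalling P) (x : ι) (T : α → κ) : ∑ a, ∑ b, P x (T a) a b = 1 := by
  obtain ⟨y⟩ := ‹Nonempty κ›
  rw [← hP.sum_eq_one x y]
  exact sum_congr rfl fun a _ => hP.marginal_fst_eq x a (T a) y

theorem IsNoSignalling.sum_sum_erase_add_eq [Nonempty κ] [DecidableEq β] {P : ι → κ → α → β → ℝ}
    (hP : IsNoSignalling P) (p w : ℝ) (x₀ : ι) (T : α → κ) (m : κ → β)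
    (hz : ∀ a, P x₀ (T a) a (m (T a)) = 0) :
    ∑ a, ∑ n ∈ univ.erase (m (T a)), (p * P x₀ (T a) a n + w) =
      p + Fintype.card α * (Fintype.card β - 1) * w := by
  calc ∑ a, ∑ n ∈ univ.erase (m (T a)), (p * P x₀ (T a) a n + w)
      = ∑ a, (p * ∑ n, P x₀ (T a) a n + (Fintype.card β - 1) * w) := by
        refine sum_congr rfl fun a _ => ?_
        rw [sum_add_distrib, ← mul_sum, sum_erase _ (hz a), sum_const,
          card_erase_of_mem (mem_univ _), card_univ, nsmul_eq_mul,
          Nat.cast_pred (Fintype.card_pos_iff.2 ⟨m (T a)⟩)]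
    _ = p + Fintype.card α * (Fintype.card β - 1) * w := by
        rw [sum_add_distrib, ← mul_sum, hP.sum_sum_comp_eq_one, sum_const, card_univ,
          nsmul_eq_mul]
        ring

end NoSignalling

theorem sum_deterministicStrategy {ι κ α β : Type*} [Fintype ι] [Fintype κ] [Fintype α]
    [Fintype β] [DecidableEq ι] [DecidableEq κ] [DecidableEq β] (R : ι → κ → α → β → ℝ)
    (x₀ : ι) (T : α → κ) (τ : κ) (n : β) :
    ∑ x, ∑ a, ∑ y, ∑ b, (if x = x₀ then (1 : ℝ) else 0) * (if τ = T a then 1 else 0) *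
      (if y = τ then 1 else 0) * R x y a b * (if n = b then 1 else 0) =
      ∑ a, if τ = T a then R x₀ τ a n else 0 := by
  rw [sum_comm]
  simp [ite_mul, mul_ite]

theorem sum_sum_filter_ne_ite_eq_sum_sum_erase {κ α β : Type*} [Fintype κ] [Fintype α] [Fintype β]
    [DecidableEq κ] [DecidableEq β] (f : κ → α → β → ℝ) (T : α → κ) (m : κ → β) :
    ∑ τ, ∑ n ∈ univ.filter (fun n => n ≠ m τ), ∑ a, (if τ = T a then f τ a n else 0) =
      ∑ a, ∑ n ∈ univ.erase (m (T a)), f (T a) a n := by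
  simp only [filter_ne', sum_comm (s := univ.erase _)]
  rw [sum_comm]
  simp [sum_ite_irrel]

theorem CSPayoff_eq_of_forall_sum_eq {d k : ℕ} (hk : k ≠ 0)
    (𝒩 : Fin d → Fin k → (Fin d → Fin k) → ℝ) (s : ℝ)
    (h : ∀ m, ∑ τ', ∑ n ∈ univ.filter (fun n => n ≠ m τ'), 𝒩 τ' n m = s) :
    CSPayoff d k 𝒩 = s := by
  have : (k : ℝ) ^ d ≠ 0 := by positivity
  simp [CSPayoff, h, field]

theorem one_sub_inv_pow_lt_one_sub_div {k p : ℝ} (hk : 0 < k) {d : ℕ} (hd : d ≠ 0)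
    (hp : 1 - 1 / k ^ (d - 1) < p) : 1 - 1 / k ^ d < 1 - (1 - p) / k := by
  have h := div_lt_div_of_pos_right (show 1 - p < 1 / k ^ (d - 1) by linarith) hk
  rw [div_div, ← pow_succ, Nat.sub_add_cancel (Nat.one_le_iff_ne_zero.2 hd)] at h
  linarith

theorem noisy_nonlocal_facet_advantage_CS_general
    (d k X A : ℕ) (hd : 2 ≤ d) (hk : 2 ≤ k)
    (PNL : Fin X → Fin d → Fin A → Fin k → ℝ)
    (hP0 : ∀ x y a b, 0 ≤ PNL x y a b)
    (hP1 : ∀ x y, ∑ a : Fin A, ∑ b : Fin k, PNL x y a b = 1)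
    (hNSA : ∀ x a y₁ y₂, ∑ b : Fin k, PNL x y₁ a b = ∑ b : Fin k, PNL x y₂ a b)
    (hNSB : ∀ y b x₁ x₂, ∑ a : Fin A, PNL x₁ y a b = ∑ a : Fin A, PNL x₂ y a b)
    (hfacet : ∀ (LA : Fin X → Fin A) (LB : Fin d → Fin k),
      ¬ ∃ (q : ℝ) (Q : Fin X → Fin d → Fin A → Fin k → ℝ),
        0 < q ∧ q ≤ 1 ∧
        (∀ x y a b, 0 ≤ Q x y a b) ∧
        (∀ x y, ∑ a : Fin A, ∑ b : Fin k, Q x y a b = 1) ∧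
        (∀ x a y₁ y₂, ∑ b : Fin k, Q x y₁ a b = ∑ b : Fin k, Q x y₂ a b) ∧
        (∀ y b x₁ x₂, ∑ a : Fin A, Q x₁ y a b = ∑ a : Fin A, Q x₂ y a b) ∧
        (∀ x y a b, PNL x y a b =
          q * (if a = LA x ∧ b = LB y then 1 else 0) + (1 - q) * Q x y a b))
    (p : ℝ) (hp1 : 1 - 1 / (k : ℝ) ^ (d - 1) < p) :
    ∃ (px : Fin X → (Fin d → Fin k) → ℝ)
      (pe : Fin d → Fin A → (Fin d → Fin k) → ℝ)
      (py : Fin d → Fin d → ℝ)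
      (pd : Fin k → Fin d → Fin k → ℝ),
      (∀ x m, 0 ≤ px x m) ∧ (∀ m, ∑ x : Fin X, px x m = 1) ∧
      (∀ τ' a m, 0 ≤ pe τ' a m) ∧ (∀ a m, ∑ τ' : Fin d, pe τ' a m = 1) ∧
      (∀ y τ', 0 ≤ py y τ') ∧ (∀ τ', ∑ y : Fin d, py y τ' = 1) ∧
      (∀ n τ' b, 0 ≤ pd n τ' b) ∧ (∀ τ' b, ∑ n : Fin k, pd n τ' b = 1) ∧
      CSPayoff d k (fun τ' n m =>
        ∑ x : Fin X, ∑ a : Fin A, ∑ y : Fin d, ∑ b : Fin k,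
          px x m * pe τ' a m * py y τ' *
            (p * PNL x y a b + (1 - p) * (1 / ((A : ℝ) * (k : ℝ)))) * pd n τ' b)
        > 1 - 1 / (k : ℝ) ^ d := by
  have hP : IsNoSignalling PNL := ⟨hP0, hP1, hNSA, hNSB⟩
  have hF : IsOnNonlocalFacet PNL := fun LA LB ⟨q, Q, hq0, hq1, hQ, hdec⟩ =>
    hfacet LA LB ⟨q, Q, hq0, hq1, hQ.1, hQ.2, hQ.3, hQ.4, hdec⟩
  have : Nonempty (Fin d) := ⟨⟨0, by omega⟩⟩
  choose XF T hT using hP.exists_forall_exists_eq_zero hF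
  have hA : (A : ℝ) ≠ 0 := Nat.cast_ne_zero.2 <| by
    rintro rfl
    simpa using hP1 (XF fun _ => ⟨0, by omega⟩) ⟨0, by omega⟩
  refine ⟨fun x m => if x = XF m then 1 else 0, fun τ' a m => if τ' = T m a then 1 else 0,
    fun y τ' => if y = τ' then 1 else 0, fun n _ b => if n = b then 1 else 0,
    fun _ _ => by positivity, fun _ => by simp, fun _ _ _ => by positivity, fun _ _ => by simp,
    fun _ _ => by positivity, fun _ => by simp, fun _ _ _ => by positivity, fun _ _ => by simp, ?_⟩
  rw [CSPayoff_eq_of_forall_sum_eq (by omega) _ (1 - (1 - p) / k)]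
  · exact one_sub_inv_pow_lt_one_sub_div (by positivity) (by omega) hp1
  intro m
  simp only [sum_deterministicStrategy]
  rw [sum_sum_filter_ne_ite_eq_sum_sum_erase, hP.sum_sum_erase_add_eq _ _ _ _ _ (hT m)]
  simp only [Fintype.card_fin]
  field_simp
  ring

/-- Noise robustness for CS[d,k] (Corollary 1): for `1 - 1/k^(d-1) < p ≤ 1`,
a noisy non-local facet correlation `p·P_NL + (1-p)·P_WN` still beats the
shared-randomness bound `1 - 1/k^d`. -/
theorem noisy_nonlocal_facet_advantage_CS
    (d k X A : ℕ) (hd : 2 ≤ d) (hk : 2 ≤ k)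
    (PNL : Fin X → Fin d → Fin A → Fin k → ℝ)
    (hP0 : ∀ x y a b, 0 ≤ PNL x y a b)
    (hP1 : ∀ x y, ∑ a : Fin A, ∑ b : Fin k, PNL x y a b = 1)
    (hNSA : ∀ x a y₁ y₂, ∑ b : Fin k, PNL x y₁ a b = ∑ b : Fin k, PNL x y₂ a b)
    (hNSB : ∀ y b x₁ x₂, ∑ a : Fin A, PNL x₁ y a b = ∑ a : Fin A, PNL x₂ y a b)
    (hfacet : ∀ (LA : Fin X → Fin A) (LB : Fin d → Fin k),
      ¬ ∃ (q : ℝ) (Q : Fin X → Fin d → Fin A → Fin k → ℝ),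
        0 < q ∧ q ≤ 1 ∧
        (∀ x y a b, 0 ≤ Q x y a b) ∧
        (∀ x y, ∑ a : Fin A, ∑ b : Fin k, Q x y a b = 1) ∧
        (∀ x a y₁ y₂, ∑ b : Fin k, Q x y₁ a b = ∑ b : Fin k, Q x y₂ a b) ∧
        (∀ y b x₁ x₂, ∑ a : Fin A, Q x₁ y a b = ∑ a : Fin A, Q x₂ y a b) ∧
        (∀ x y a b, PNL x y a b =
          q * (if a = LA x ∧ b = LB y then 1 else 0) + (1 - q) * Q x y a b))
    (p : ℝ) (hp1 : 1 - 1 / (k : ℝ) ^ (d - 1) < p) (hp2 : p ≤ 1) :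
    ∃ (px : Fin X → (Fin d → Fin k) → ℝ)
      (pe : Fin d → Fin A → (Fin d → Fin k) → ℝ)
      (py : Fin d → Fin d → ℝ)
      (pd : Fin k → Fin d → Fin k → ℝ),
      (∀ x m, 0 ≤ px x m) ∧ (∀ m, ∑ x : Fin X, px x m = 1) ∧
      (∀ τ' a m, 0 ≤ pe τ' a m) ∧ (∀ a m, ∑ τ' : Fin d, pe τ' a m = 1) ∧
      (∀ y τ', 0 ≤ py y τ') ∧ (∀ τ', ∑ y : Fin d, py y τ' = 1) ∧
      (∀ n τ' b, 0 ≤ pd n τ' b) ∧ (∀ τ' b, ∑ n : Fin k, pd n τ' b = 1) ∧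
      CSPayoff d k (fun τ' n m =>
        ∑ x : Fin X, ∑ a : Fin A, ∑ y : Fin d, ∑ b : Fin k,
          px x m * pe τ' a m * py y τ' *
            (p * PNL x y a b + (1 - p) * (1 / ((A : ℝ) * (k : ℝ)))) * pd n τ' b)
        > 1 - 1 / (k : ℝ) ^ d :=
  noisy_nonlocal_facet_advantage_CS_general d k X A hd hk PNL hP0 hP1 hNSA hNSB hfacet p hp1
end

section
/- Shared-randomness bound for relation tasks (Theorem 4): Let d, k ≥ 2, let M be a finite set of relations m ⊆ Fin d × Fin k, and let ω : M → ℝ with ω m ≥ 0 and ∑_{m ∈ M} ω m = 1. Assume that for every function LB : Fin d → Fin k there exists m ∈ M with ω m > 0 such that (y,b) ∈ m implies b ≠ LB y. Then the maximum of the payoff S_W over all shared-randomness-assisted wire-reading distributions equals max over functions D : Fin d → Fin k of ∑_{m ∈ M such that ∃ α ∈ Fin d, (α, D α) ∈ m} ω m (the bound holds for all such distributions and is attained), and this value is strictly less than 1. -/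
open Finset


/-- Total weight of the deterministic-decoder mixture induced by a conditional
distribution `q` is one. -/
lemma rtsrb_weight_sum {d k : ℕ} (q : Fin k → Fin d → ℝ)
    (hq1 : ∀ τ, ∑ n, q n τ = 1) :
    ∑ D : Fin d → Fin k, ∏ τ, q (D τ) τ = 1 := by
  have h := Finset.prod_univ_sum (fun _ : Fin d => (univ : Finset (Fin k)))
      (fun τ j => q j τ)
  rw [Fintype.piFinset_univ] at h
  rw [← h]
  simp [hq1]

/-- Marginal of the deterministic-decoder mixture recovers `q`. -/
lemma rtsrb_marginal {d k : ℕ} (q : Fin k → Fin d → ℝ)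
    (hq1 : ∀ τ, ∑ n, q n τ = 1) (τ' : Fin d) (n : Fin k) :
    ∑ D : Fin d → Fin k, (∏ τ, q (D τ) τ) * (if D τ' = n then (1:ℝ) else 0) = q n τ' := by
  have h1 : ∀ D : Fin d → Fin k, (∏ τ, q (D τ) τ) * (if D τ' = n then (1:ℝ) else 0)
      = ∏ τ, (if τ = τ' then (if D τ = n then q (D τ) τ else 0) else q (D τ) τ) := by
    intro D
    by_cases h : D τ' = n
    · rw [if_pos h, mul_one]
      refine Finset.prod_congr rfl fun τ _ => ?_
      by_cases ht : τ = τ' <;> simp [ht, h]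
    · rw [if_neg h, mul_zero]
      refine (Finset.prod_eq_zero (Finset.mem_univ τ') ?_).symm
      simp [h]
  simp only [h1]
  have h := Finset.prod_univ_sum (fun _ : Fin d => (univ : Finset (Fin k)))
      (fun τ j => (if τ = τ' then (if j = n then q j τ else 0) else q j τ))
  rw [Fintype.piFinset_univ] at h
  rw [← h]
  rw [Finset.prod_eq_single τ' (fun τ _ hτ => by simp [hτ, hq1 τ]) (by simp)]
  simp [Finset.sum_ite_eq' univ n (fun j => q j τ')]

/-- Per-relation bound: deterministic decoder `D` with any encoder distribution. -/
lemma rtsrb_per_m {d k : ℕ} (m : Finset (Fin d × Fin k)) (D : Fin d → Fin k)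
    (pe : Fin d → ℝ) (h0 : ∀ τ, 0 ≤ pe τ) (h1 : ∑ τ, pe τ = 1) :
    ∑ p ∈ m, pe p.1 * (if D p.1 = p.2 then (1:ℝ) else 0) ≤
      if (∃ α : Fin d, (α, D α) ∈ m) then 1 else 0 := by
  by_cases hm : ∃ α : Fin d, (α, D α) ∈ m
  · rw [if_pos hm]
    have hrw : ∑ p ∈ m, pe p.1 * (if D p.1 = p.2 then (1:ℝ) else 0)
        = ∑ p ∈ m.filter (fun p => D p.1 = p.2), pe p.1 := by
      rw [Finset.sum_filter]
      exact Finset.sum_congr rfl fun p _ => by by_cases h : D p.1 = p.2 <;> simp [h]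
    rw [hrw]
    have hinj : ∀ p ∈ m.filter (fun p => D p.1 = p.2),
        ∀ p' ∈ m.filter (fun p => D p.1 = p.2), p.1 = p'.1 → p = p' := by
      intro p hp p' hp' h
      have h2 := (Finset.mem_filter.1 hp).2
      have h2' := (Finset.mem_filter.1 hp').2
      exact Prod.ext h (by rw [← h2, ← h2', h])
    calc ∑ p ∈ m.filter (fun p => D p.1 = p.2), pe p.1
        = ∑ τ ∈ (m.filter (fun p => D p.1 = p.2)).image Prod.fst, pe τ :=
          (Finset.sum_image hinj).symm
      _ ≤ ∑ τ : Fin d, pe τ :=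
          Finset.sum_le_sum_of_subset_of_nonneg (Finset.subset_univ _)
            (fun τ _ _ => h0 τ)
      _ = 1 := h1
  · rw [if_neg hm]
    refine le_of_eq (Finset.sum_eq_zero fun p hp => ?_)
    have : ¬ D p.1 = p.2 := fun h => hm ⟨p.1, by rw [h]; simpa using hp⟩
    simp [this]

/-- Shared-randomness bound for relation tasks (Theorem 4): the maximum payoff over
all shared-randomness-assisted wire-reading distributions equals the maximum over
deterministic decodings `D : Fin d → Fin k` of the total weight of relations hit by
`D`, and this value is strictly less than `1`. -/
theorem relation_task_shared_randomness_bound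
    (d k : ℕ) (hd : 2 ≤ d) (hk : 2 ≤ k)
    (M : Finset (Finset (Fin d × Fin k)))
    (ω : Finset (Fin d × Fin k) → ℝ)
    (hω0 : ∀ m ∈ M, 0 ≤ ω m)
    (hω1 : ∑ m ∈ M, ω m = 1)
    (hcov : ∀ LB : Fin d → Fin k,
      ∃ m ∈ M, 0 < ω m ∧ ∀ yb ∈ m, yb.2 ≠ LB yb.1) :
    ∃ D₀ : Fin d → Fin k,
      -- value attained at the maximizing decoding `D₀`
      (∀ D : Fin d → Fin k,
        ∑ m ∈ M.filter (fun m => ∃ α : Fin d, (α, D α) ∈ m), ω m ≤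
        ∑ m ∈ M.filter (fun m => ∃ α : Fin d, (α, D₀ α) ∈ m), ω m) ∧
      -- upper bound for every shared-randomness-assisted distribution
      (∀ (L : ℕ) (μ : Fin L → ℝ)
         (pe : Fin d → Finset (Fin d × Fin k) → Fin L → ℝ)
         (pd : Fin k → Fin d → Fin L → ℝ),
         (∀ l, 0 ≤ μ l) → (∑ l, μ l = 1) →
         (∀ τ' m l, 0 ≤ pe τ' m l) → (∀ m l, ∑ τ' : Fin d, pe τ' m l = 1) →
         (∀ n τ' l, 0 ≤ pd n τ' l) → (∀ τ' l, ∑ n : Fin k, pd n τ' l = 1) →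
         (∑ m ∈ M, ∑ p ∈ m, ω m * (∑ l, μ l * pe p.1 m l * pd p.2 p.1 l)) ≤
           ∑ m ∈ M.filter (fun m => ∃ α : Fin d, (α, D₀ α) ∈ m), ω m) ∧
      -- the bound is attained
      (∃ (L : ℕ) (μ : Fin L → ℝ)
         (pe : Fin d → Finset (Fin d × Fin k) → Fin L → ℝ)
         (pd : Fin k → Fin d → Fin L → ℝ),
         (∀ l, 0 ≤ μ l) ∧ (∑ l, μ l = 1) ∧
         (∀ τ' m l, 0 ≤ pe τ' m l) ∧ (∀ m l, ∑ τ' : Fin d, pe τ' m l = 1) ∧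
         (∀ n τ' l, 0 ≤ pd n τ' l) ∧ (∀ τ' l, ∑ n : Fin k, pd n τ' l = 1) ∧
         (∑ m ∈ M, ∑ p ∈ m, ω m * (∑ l, μ l * pe p.1 m l * pd p.2 p.1 l)) =
           ∑ m ∈ M.filter (fun m => ∃ α : Fin d, (α, D₀ α) ∈ m), ω m) ∧
      -- and it is strictly smaller than 1
      (∑ m ∈ M.filter (fun m => ∃ α : Fin d, (α, D₀ α) ∈ m), ω m) < 1 := by
  classical
  haveI : NeZero d := ⟨by omega⟩
  haveI : NeZero k := ⟨by omega⟩
  set V : (Fin d → Fin k) → ℝ :=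
    fun D => ∑ m ∈ M.filter (fun m => ∃ α : Fin d, (α, D α) ∈ m), ω m with hV
  obtain ⟨D₀, -, hmax⟩ :=
    Finset.exists_max_image (univ : Finset (Fin d → Fin k)) V Finset.univ_nonempty
  refine ⟨D₀, fun D => hmax D (Finset.mem_univ D), ?_, ?_, ?_⟩
  · -- upper bound
    intro L μ pe pd hμ0 hμ1 hpe0 hpe1 hpd0 hpd1
    have hrw : (∑ m ∈ M, ∑ p ∈ m, ω m * (∑ l, μ l * pe p.1 m l * pd p.2 p.1 l))
        = ∑ l, μ l * ∑ m ∈ M, ∑ p ∈ m, ω m * (pe p.1 m l * pd p.2 p.1 l) := by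
      simp only [Finset.mul_sum]
      rw [Finset.sum_comm]
      refine Finset.sum_congr rfl fun l _ => ?_
      rw [Finset.sum_comm]
      refine Finset.sum_congr rfl fun m _ => Finset.sum_congr rfl fun p _ => by ring
    rw [hrw]
    have hVD₀ : V D₀ = ∑ l, μ l * V D₀ := by rw [← Finset.sum_mul, hμ1, one_mul]
    rw [show (∑ m ∈ M.filter (fun m => ∃ α : Fin d, (α, D₀ α) ∈ m), ω m) = V D₀ from rfl,
      hVD₀]
    refine Finset.sum_le_sum fun l _ => ?_
    refine mul_le_mul_of_nonneg_left ?_ (hμ0 l)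
    set w : (Fin d → Fin k) → ℝ := fun D => ∏ τ, pd (D τ) τ l with hw
    have hw0 : ∀ D, 0 ≤ w D := fun D => Finset.prod_nonneg fun τ _ => hpd0 _ _ _
    have hw1 : ∑ D : Fin d → Fin k, w D = 1 :=
      rtsrb_weight_sum (fun n τ => pd n τ l) (fun τ => hpd1 τ l)
    have hmarg : ∀ (τ' : Fin d) (n : Fin k),
        pd n τ' l = ∑ D : Fin d → Fin k, w D * (if D τ' = n then (1:ℝ) else 0) :=
      fun τ' n => (rtsrb_marginal (fun n τ => pd n τ l) (fun τ => hpd1 τ l) τ' n).symm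
    calc ∑ m ∈ M, ∑ p ∈ m, ω m * (pe p.1 m l * pd p.2 p.1 l)
        = ∑ D : Fin d → Fin k, w D *
            ∑ m ∈ M, ∑ p ∈ m, ω m * (pe p.1 m l * (if D p.1 = p.2 then (1:ℝ) else 0)) := by
          simp only [Finset.mul_sum]
          rw [Finset.sum_comm]
          refine Finset.sum_congr rfl fun m _ => ?_
          rw [Finset.sum_comm]
          refine Finset.sum_congr rfl fun p _ => ?_
          rw [hmarg p.1 p.2]
          simp only [Finset.mul_sum]
          exact Finset.sum_congr rfl fun D _ => by ring
      _ ≤ ∑ D : Fin d → Fin k, w D * V D := by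
          refine Finset.sum_le_sum fun D _ => mul_le_mul_of_nonneg_left ?_ (hw0 D)
          have hVD : V D
              = ∑ m ∈ M, ω m * (if (∃ α : Fin d, (α, D α) ∈ m) then (1:ℝ) else 0) := by
            rw [show V D = ∑ m ∈ M.filter (fun m => ∃ α : Fin d, (α, D α) ∈ m), ω m
                from rfl, Finset.sum_filter]
            exact Finset.sum_congr rfl fun m _ => by
              by_cases h : ∃ α : Fin d, (α, D α) ∈ m <;> simp [h]
          rw [hVD]
          refine Finset.sum_le_sum fun m hm => ?_
          rw [← Finset.mul_sum]
          exact mul_le_mul_of_nonneg_left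
            (rtsrb_per_m m D (fun τ => pe τ m l) (fun τ => hpe0 τ m l) (hpe1 m l))
            (hω0 m hm)
      _ ≤ ∑ D : Fin d → Fin k, w D * V D₀ :=
          Finset.sum_le_sum fun D _ =>
            mul_le_mul_of_nonneg_left (hmax D (Finset.mem_univ D)) (hw0 D)
      _ = V D₀ := by rw [← Finset.sum_mul, hw1, one_mul]
  · -- attainment
    refine ⟨1, fun _ => 1,
      (fun τ' m _ => if h : ∃ α : Fin d, (α, D₀ α) ∈ m then
         (if τ' = h.choose then 1 else 0) else (if τ' = 0 then 1 else 0)),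
      (fun n τ' _ => if n = D₀ τ' then 1 else 0),
      fun _ => zero_le_one, by simp, ?_, ?_, ?_, ?_, ?_⟩
    · intro τ' m _
      dsimp only
      split <;> split <;> norm_num
    · intro m _
      dsimp only
      split <;> simp [Finset.sum_ite_eq']
    · intro n τ' _
      dsimp only
      split <;> norm_num
    · intro τ' _
      dsimp only
      simp [Finset.sum_ite_eq']
    · dsimp only
      rw [Finset.sum_filter]
      refine Finset.sum_congr rfl fun m _ => ?_
      rw [← Finset.mul_sum]
      by_cases h : ∃ α : Fin d, (α, D₀ α) ∈ m
      · rw [if_pos h]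
        have hterm : ∀ p ∈ m, (∑ l : Fin 1,
            (1:ℝ) * (if h' : ∃ α : Fin d, (α, D₀ α) ∈ m then
              (if p.1 = h'.choose then (1:ℝ) else 0) else (if p.1 = 0 then 1 else 0))
              * (if p.2 = D₀ p.1 then (1:ℝ) else 0))
            = (if p = (h.choose, D₀ h.choose) then (1:ℝ) else 0) := by
          intro p _
          rw [Fin.sum_univ_one, dif_pos h, one_mul]
          by_cases h1 : p.1 = h.choose
          · by_cases h2 : p.2 = D₀ p.1
            · have hp : p = (h.choose, D₀ h.choose) := Prod.ext h1 (by rw [h2, h1])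
              simp [h1, h2, hp]
            · have hp : p ≠ (h.choose, D₀ h.choose) := by rintro rfl; simp at h2
              simp [h2, hp]
          · have hp : p ≠ (h.choose, D₀ h.choose) := by rintro rfl; simp at h1
            simp [h1, hp]
        rw [Finset.sum_congr rfl hterm,
          Finset.sum_ite_eq' m (h.choose, D₀ h.choose) (fun _ => (1:ℝ)),
          if_pos h.choose_spec, mul_one]
      · rw [if_neg h]
        have hzero : ∑ p ∈ m, (∑ l : Fin 1,
            (1:ℝ) * (if h' : ∃ α : Fin d, (α, D₀ α) ∈ m then
              (if p.1 = h'.choose then (1:ℝ) else 0) else (if p.1 = 0 then 1 else 0))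
              * (if p.2 = D₀ p.1 then (1:ℝ) else 0)) = 0 := by
          refine Finset.sum_eq_zero fun p hp => ?_
          have h2 : ¬ p.2 = D₀ p.1 := fun he => h ⟨p.1, by rw [← he]; simpa using hp⟩
          simp [h2]
        rw [hzero, mul_zero]
  · -- strictly below 1
    obtain ⟨m₁, hm₁, hpos, hno⟩ := hcov D₀
    have hsub : M.filter (fun m => ∃ α : Fin d, (α, D₀ α) ∈ m) ⊆ M.erase m₁ := by
      intro m hm
      obtain ⟨hmM, α, hα⟩ := Finset.mem_filter.1 hm
      refine Finset.mem_erase.2 ⟨?_, hmM⟩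
      rintro rfl
      exact hno _ hα rfl
    calc ∑ m ∈ M.filter (fun m => ∃ α : Fin d, (α, D₀ α) ∈ m), ω m
        ≤ ∑ m ∈ M.erase m₁, ω m :=
          Finset.sum_le_sum_of_subset_of_nonneg hsub
            (fun m hm _ => hω0 m (Finset.mem_of_mem_erase hm))
      _ < ω m₁ + ∑ m ∈ M.erase m₁, ω m := by linarith
      _ = 1 := by rw [Finset.add_sum_erase M ω hm₁, hω1]
end

section
/- Shared-randomness bound for the pair-relation task (Corollary 2, part (i)): Let d ≥ 2 and consider the pair-relation task whose input set M consists of the relations R_{i j k l} = {(i,k),(j,l)} ⊆ Fin d × Fin 2 for i < j in Fin d and k,l ∈ Fin 2, with uniform weights ω m = 1/(2d(d-1)). Then the maximum of the payoff S_W over all shared-randomness-assisted wire-reading distributions equals 3/4 (the bound holds for all such distributions and is attained). -/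
open Finset

/-- The input set of the pair-relation task on `(d,2)`: all relations
`R_{ijkl} = {(i,k),(j,l)}` with `i < j` in `Fin d` and `k,l ∈ Fin 2`. -/
def pairM (d : ℕ) : Finset (Finset (Fin d × Fin 2)) :=
  ((Finset.univ : Finset (Fin d × Fin d × Fin 2 × Fin 2)).filter
      (fun q => q.1 < q.2.1)).image
    (fun q => ({(q.1, q.2.2.1), (q.2.1, q.2.2.2)} : Finset (Fin d × Fin 2)))

/-- The payoff of the pair-relation task on `(d,2)` with uniform weights
`ω m = 1/(2d(d-1))`, for the wire-reading conditional distribution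
`𝒩 τ' n m = 𝒩(τ',n|m)`. -/
noncomputable def pairPayoff (d : ℕ)
    (𝒩 : Fin d → Fin 2 → Finset (Fin d × Fin 2) → ℝ) : ℝ :=
  ∑ m ∈ pairM d, ∑ p ∈ m,
    (1 / (2 * (d : ℝ) * ((d : ℝ) - 1))) * 𝒩 p.1 p.2 m


/-!
For a pair `i < j`, the four relations `R_{ijkl}` involve only the wires `i` and `j`. For fixed
shared randomness Alice sends `i` or `j` with total probability at most one, so she wins on
`R_{ijkl}` with probability at most `max (pd k i) (pd l j)`; for two distributions on `Fin 2` these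
four maxima sum to at most `3`. The payoff is the average over the pairs of a quarter of these sums,
hence at most `3/4`. Bob always answering `0`, with Alice sending a wire on which the relation
allows the answer `0`, loses only on the relations `R_{ij11}` and attains `3/4`.
-/

theorem card_filter_fst_lt_snd (α : Type*) [Fintype α] [LinearOrder α] :
    #(univ.filter fun p : α × α => p.1 < p.2) = (Fintype.card α).choose 2 := by
  have h := sum_sym2_filter_not_isDiag (univ : Finset α) (fun _ => 1)
  simp only [sum_const, smul_eq_mul, mul_one, sym2_univ] at h
  rw [← Sym2.card_subtype_not_diag, Fintype.card_subtype, h]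
  congr 1
  ext p
  simpa using ne_of_lt

section

variable {d : ℕ}

noncomputable def pairScore (𝒩 : Fin d → Fin 2 → Finset (Fin d × Fin 2) → ℝ) (i j : Fin d) : ℝ :=
  ∑ k : Fin 2, ∑ l : Fin 2, (𝒩 i k {(i, k), (j, l)} + 𝒩 j l {(i, k), (j, l)})

theorem injOn_pairRelation :
    Set.InjOn (fun q : Fin d × Fin d × Fin 2 × Fin 2 =>
      ({(q.1, q.2.2.1), (q.2.1, q.2.2.2)} : Finset (Fin d × Fin 2)))
      {q | q.1 < q.2.1} := by
  rintro ⟨i, j, k, l⟩ (hij : i < j) ⟨i', j', k', l'⟩ (hij' : i' < j')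
    (h : ({(i, k), (j, l)} : Finset _) = {(i', k'), (j', l')})
  have hik : (i, k) ∈ ({(i', k'), (j', l')} : Finset (Fin d × Fin 2)) := h ▸ by simp
  have hjl : (j, l) ∈ ({(i', k'), (j', l')} : Finset (Fin d × Fin 2)) := h ▸ by simp
  simp only [mem_insert, mem_singleton, Prod.mk.injEq] at hik hjl
  rcases hik with ⟨rfl, rfl⟩ | ⟨rfl, rfl⟩ <;> rcases hjl with ⟨rfl, rfl⟩ | ⟨rfl, rfl⟩
  · exact absurd hij (lt_irrefl _)
  · rfl
  · exact absurd (hij.trans hij') (lt_irrefl _)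
  · exact absurd hij (lt_irrefl _)

theorem pairPayoff_eq_sum_pairScore (𝒩 : Fin d → Fin 2 → Finset (Fin d × Fin 2) → ℝ) :
    pairPayoff d 𝒩 = (∑ p ∈ univ.filter (fun p : Fin d × Fin d => p.1 < p.2),
      pairScore 𝒩 p.1 p.2) / (4 * (d.choose 2 : ℝ)) := by
  have hweight : 1 / (2 * (d : ℝ) * (d - 1)) = 1 / (4 * (d.choose 2 : ℝ)) := by
    rw [Nat.cast_choose_two]; ring
  unfold pairPayoff pairM
  simp_rw [← mul_sum, hweight, one_div_mul_eq_div]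
  congr 1
  rw [sum_image fun q hq q' hq' => injOn_pairRelation (by simpa using hq) (by simpa using hq'),
    sum_filter, sum_filter, Fintype.sum_prod_type, Fintype.sum_prod_type]
  refine sum_congr rfl fun i _ => ?_
  rw [Fintype.sum_prod_type]
  refine sum_congr rfl fun j _ => ?_
  split_ifs with hij
  · simp [pairScore, Fintype.sum_prod_type, hij.ne]
  · simp

theorem pairPayoff_le_of_pairScore_le {𝒩 : Fin d → Fin 2 → Finset (Fin d × Fin 2) → ℝ} {c : ℝ}
    (hc : 0 ≤ c) (h : ∀ i j, i < j → pairScore 𝒩 i j ≤ c) : pairPayoff d 𝒩 ≤ c / 4 := by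
  rw [pairPayoff_eq_sum_pairScore]
  refine div_le_of_le_mul₀ (by positivity) (by positivity) ?_
  calc _ ≤ #(univ.filter fun p : Fin d × Fin d => p.1 < p.2) • c :=
        sum_le_card_nsmul _ _ _ fun p hp => h p.1 p.2 (mem_filter.1 hp).2
    _ = c / 4 * (4 * (d.choose 2 : ℝ)) := by
        rw [card_filter_fst_lt_snd, Fintype.card_fin, nsmul_eq_mul]; ring

theorem pairPayoff_eq_of_pairScore_eq {𝒩 : Fin d → Fin 2 → Finset (Fin d × Fin 2) → ℝ} {c : ℝ}
    (hd : 2 ≤ d) (h : ∀ i j, i < j → pairScore 𝒩 i j = c) : pairPayoff d 𝒩 = c / 4 := by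
  have hpairs : (d.choose 2 : ℝ) ≠ 0 := by exact_mod_cast (Nat.choose_pos hd).ne'
  rw [pairPayoff_eq_sum_pairScore, sum_congr rfl fun p hp => h p.1 p.2 (mem_filter.1 hp).2,
    sum_const, card_filter_fst_lt_snd, Fintype.card_fin, nsmul_eq_mul]
  field_simp

theorem mul_add_mul_le_max {α : Type*} [Semiring α] [LinearOrder α] [IsOrderedRing α]
    {a b x y : α} (ha : 0 ≤ a) (hb : 0 ≤ b) (hab : a + b ≤ 1) (hx : 0 ≤ x) :
    a * x + b * y ≤ max x y :=
  calc a * x + b * y ≤ a * max x y + b * max x y := by gcongr <;> simp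
    _ = (a + b) * max x y := (add_mul a b _).symm
    _ ≤ max x y := mul_le_of_le_one_left (hx.trans (le_max_left x y)) hab

theorem sum_max_le_three {p q : Fin 2 → ℝ} (hp : ∀ k, 0 ≤ p k) (hq : ∀ l, 0 ≤ q l)
    (hp1 : ∑ k, p k = 1) (hq1 : ∑ l, q l = 1) : ∑ k, ∑ l, max (p k) (q l) ≤ 3 := by
  simp only [Fin.sum_univ_two, max_def] at hp1 hq1 ⊢
  split_ifs <;> linarith [hp 0, hp 1, hq 0, hq 1]

theorem pairScore_prod_le_three {pe : Fin d → Finset (Fin d × Fin 2) → ℝ} {pd : Fin 2 → Fin d → ℝ}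
    (hpe : ∀ τ m, 0 ≤ pe τ m) (hpe1 : ∀ m, ∑ τ, pe τ m = 1)
    (hpd : ∀ n τ, 0 ≤ pd n τ) (hpd1 : ∀ τ, ∑ n, pd n τ = 1) {i j : Fin d} (hij : i ≠ j) :
    pairScore (fun τ n m => pe τ m * pd n τ) i j ≤ 3 := by
  have hpair : ∀ m, pe i m + pe j m ≤ 1 := fun m => by
    rw [← sum_pair (f := (pe · m)) hij, ← hpe1 m]
    exact sum_le_univ_sum_of_nonneg fun τ => hpe τ m
  calc pairScore (fun τ n m => pe τ m * pd n τ) i j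
      ≤ ∑ k, ∑ l, max (pd k i) (pd l j) := sum_le_sum fun k _ => sum_le_sum fun l _ =>
        mul_add_mul_le_max (hpe _ _) (hpe _ _) (hpair _) (hpd _ _)
    _ ≤ 3 := sum_max_le_three (hpd · i) (hpd · j) (hpd1 i) (hpd1 j)

theorem pairScore_sum_mul {L : ℕ} (μ : Fin L → ℝ)
    (𝒩 : Fin L → Fin d → Fin 2 → Finset (Fin d × Fin 2) → ℝ) (i j : Fin d) :
    pairScore (fun τ n m => ∑ l, μ l * 𝒩 l τ n m) i j = ∑ l, μ l * pairScore (𝒩 l) i j := by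
  simp only [pairScore, mul_sum, mul_add, ← sum_add_distrib]
  exact (sum_comm.trans (sum_congr rfl fun _ _ => sum_comm)).symm

theorem pairScore_sharedRandomness_le_three {L : ℕ} {μ : Fin L → ℝ}
    {pe : Fin d → Finset (Fin d × Fin 2) → Fin L → ℝ} {pd : Fin 2 → Fin d → Fin L → ℝ}
    (hμ : ∀ l, 0 ≤ μ l) (hμ1 : ∑ l, μ l = 1)
    (hpe : ∀ τ m l, 0 ≤ pe τ m l) (hpe1 : ∀ m l, ∑ τ, pe τ m l = 1)
    (hpd : ∀ n τ l, 0 ≤ pd n τ l) (hpd1 : ∀ τ l, ∑ n, pd n τ l = 1) {i j : Fin d} (hij : i ≠ j) :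
    pairScore (fun τ n m => ∑ l, μ l * pe τ m l * pd n τ l) i j ≤ 3 :=
  calc pairScore (fun τ n m => ∑ l, μ l * pe τ m l * pd n τ l) i j
      = ∑ l, μ l * pairScore (fun τ n m => pe τ m l * pd n τ l) i j := by
        simp_rw [mul_assoc]; exact pairScore_sum_mul μ _ i j
    _ ≤ ∑ l, μ l * 3 := sum_le_sum fun l _ => mul_le_mul_of_nonneg_left
        (pairScore_prod_le_three (hpe · · l) (hpe1 · l) (hpd · · l) (hpd1 · l) hij) (hμ l)
    _ = 3 := by rw [← sum_mul, hμ1, one_mul]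

noncomputable def zeroWire (τ₀ : Fin d) (m : Finset (Fin d × Fin 2)) : Fin d :=
  if h : ∃ τ, (τ, 0) ∈ m then h.choose else τ₀

theorem zeroWire_mem {τ₀ : Fin d} {m : Finset (Fin d × Fin 2)} (h : ∃ τ, (τ, 0) ∈ m) :
    (zeroWire τ₀ m, 0) ∈ m := by
  rw [zeroWire, dif_pos h]
  exact h.choose_spec

theorem pairScore_zeroWire (τ₀ : Fin d) {i j : Fin d} (hij : i ≠ j) :
    pairScore (fun τ n m => (if τ = zeroWire τ₀ m then 1 else 0) * (if n = 0 then 1 else 0))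
      i j = 3 := by
  have hwin : ∀ k l : Fin 2,
      (if i = zeroWire τ₀ {(i, k), (j, l)} then (1 : ℝ) else 0) * (if k = 0 then 1 else 0) +
        (if j = zeroWire τ₀ {(i, k), (j, l)} then 1 else 0) * (if l = 0 then 1 else 0) =
      if k = 0 ∨ l = 0 then 1 else 0 := by
    intro k l
    by_cases hkl : k = 0 ∨ l = 0
    · have hmem := zeroWire_mem (τ₀ := τ₀) (m := {(i, k), (j, l)}) (by
        rcases hkl with rfl | rfl
        exacts [⟨i, by simp⟩, ⟨j, by simp⟩])
      simp only [mem_insert, mem_singleton, Prod.mk.injEq] at hmem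
      rcases hmem with ⟨hw, rfl⟩ | ⟨hw, rfl⟩ <;> simp [hw, hij, hij.symm]
    · obtain ⟨hk, hl⟩ := not_or.1 hkl
      simp [hk, hl]
  simp only [pairScore, hwin, Fin.sum_univ_two]
  norm_num

end

/-- Shared-randomness bound for the pair-relation task (Corollary 2, part (i)):
the maximum payoff over all shared-randomness-assisted wire-reading distributions
equals `3/4`. -/
theorem pair_relation_shared_randomness_bound (d : ℕ) (hd : 2 ≤ d) :
    (∀ (L : ℕ) (μ : Fin L → ℝ)
       (pe : Fin d → Finset (Fin d × Fin 2) → Fin L → ℝ)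
       (pd : Fin 2 → Fin d → Fin L → ℝ),
       (∀ l, 0 ≤ μ l) → (∑ l, μ l = 1) →
       (∀ τ' m l, 0 ≤ pe τ' m l) → (∀ m l, ∑ τ' : Fin d, pe τ' m l = 1) →
       (∀ n τ' l, 0 ≤ pd n τ' l) → (∀ τ' l, ∑ n : Fin 2, pd n τ' l = 1) →
       pairPayoff d (fun τ' n m => ∑ l, μ l * pe τ' m l * pd n τ' l) ≤ 3 / 4) ∧
    (∃ (L : ℕ) (μ : Fin L → ℝ)
       (pe : Fin d → Finset (Fin d × Fin 2) → Fin L → ℝ)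
       (pd : Fin 2 → Fin d → Fin L → ℝ),
       (∀ l, 0 ≤ μ l) ∧ (∑ l, μ l = 1) ∧
       (∀ τ' m l, 0 ≤ pe τ' m l) ∧ (∀ m l, ∑ τ' : Fin d, pe τ' m l = 1) ∧
       (∀ n τ' l, 0 ≤ pd n τ' l) ∧ (∀ τ' l, ∑ n : Fin 2, pd n τ' l = 1) ∧
       pairPayoff d (fun τ' n m => ∑ l, μ l * pe τ' m l * pd n τ' l) = 3 / 4) := by
  refine ⟨fun L μ pe pd hμ hμ1 hpe hpe1 hpd hpd1 => pairPayoff_le_of_pairScore_le (by norm_num)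
    fun i j hij => pairScore_sharedRandomness_le_three hμ hμ1 hpe hpe1 hpd hpd1 hij.ne, ?_⟩
  let τ₀ : Fin d := ⟨0, by omega⟩
  refine ⟨1, fun _ => 1, fun τ m _ => if τ = zeroWire τ₀ m then 1 else 0,
    fun n _ _ => if n = 0 then 1 else 0, fun _ => zero_le_one, by simp,
    fun _ _ _ => by positivity, fun _ _ => by simp, fun _ _ _ => by positivity,
    fun _ _ => by simp, ?_⟩
  exact pairPayoff_eq_of_pairScore_eq hd fun i j hij => by
    simpa using pairScore_zeroWire τ₀ hij.ne
end

section
/- PR-box-structured extremal correlations win the pair-relation task perfectly (Corollary 2, part (ii)): Let d ≥ 2 and let P be a no-signalling correlation with Alice inputs Fin X, Alice outputs {0,1}, Bob inputs Fin d, Bob outputs {0,1}, such that for every pair y' ≠ y'' in Fin d there exist x', x'' ∈ Fin X with x' ≠ x'' and (α,β,γ) ∈ {0,1}³ such that for all x̂,ŷ,a,b ∈ {0,1}: P x y a b = 1/2 if a ⊕ b = x̂·ŷ ⊕ α·x̂ ⊕ β·ŷ ⊕ γ and P x y a b = 0 otherwise, where x = x' when x̂ = 0, x = x'' when x̂ =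 1, y = y' when ŷ = 0, and y = y'' when ŷ = 1. Then there exists a P-assisted wire-reading strategy for the pair-relation task on (d,2) (input set M = {R_{i j k l} = {(i,k),(j,l)} : i < j in Fin d, k,l ∈ Fin 2}, weights ω m = 1/(2d(d-1))) whose payoff satisfies S_W(𝒩) = 1. -/
open Finset

/-- PR-box-structured extremal correlations win the pair-relation task perfectly
(Corollary 2, part (ii)). Addition and multiplication on `Fin 2` are mod 2. -/
theorem PR_structured_wins_pair_relation
    (d X : ℕ) (hd : 2 ≤ d)
    (P : Fin X → Fin d → Fin 2 → Fin 2 → ℝ)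
    (hP0 : ∀ x y a b, 0 ≤ P x y a b)
    (hP1 : ∀ x y, ∑ a : Fin 2, ∑ b : Fin 2, P x y a b = 1)
    (hNSA : ∀ x a y₁ y₂, ∑ b : Fin 2, P x y₁ a b = ∑ b : Fin 2, P x y₂ a b)
    (hNSB : ∀ y b x₁ x₂, ∑ a : Fin 2, P x₁ y a b = ∑ a : Fin 2, P x₂ y a b)
    (hPR : ∀ y' y'' : Fin d, y' ≠ y'' →
      ∃ x' x'' : Fin X, x' ≠ x'' ∧ ∃ α β γ : Fin 2,
        ∀ xh yh a b : Fin 2,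
          P (if xh = 0 then x' else x'') (if yh = 0 then y' else y'') a b =
            if a + b = xh * yh + α * xh + β * yh + γ then 1 / 2 else 0) :
    ∃ (px : Fin X → Finset (Fin d × Fin 2) → ℝ)
      (pe : Fin d → Fin 2 → Finset (Fin d × Fin 2) → ℝ)
      (py : Fin d → Fin d → ℝ)
      (pd : Fin 2 → Fin d → Fin 2 → ℝ),
      (∀ x m, 0 ≤ px x m) ∧ (∀ m, ∑ x : Fin X, px x m = 1) ∧
      (∀ τ' a m, 0 ≤ pe τ' a m) ∧ (∀ a m, ∑ τ' : Fin d, pe τ' a m = 1) ∧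
      (∀ y τ', 0 ≤ py y τ') ∧ (∀ τ', ∑ y : Fin d, py y τ' = 1) ∧
      (∀ n τ' b, 0 ≤ pd n τ' b) ∧ (∀ τ' b, ∑ n : Fin 2, pd n τ' b = 1) ∧
      pairPayoff d (fun τ' n m =>
        ∑ x : Fin X, ∑ a : Fin 2, ∑ y : Fin d, ∑ b : Fin 2,
          px x m * pe τ' a m * py y τ' * P x y a b * pd n τ' b) = 1 := by
  classical
  -- Fin X is nonempty
  have hdne : (⟨0, by omega⟩ : Fin d) ≠ ⟨1, by omega⟩ := by
    intro h
    have := congrArg Fin.val h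
    simp at this
  obtain ⟨xw, -, -, -⟩ := hPR _ _ hdne
  -- mod-2 arithmetic facts
  have hc1 : ∀ k l α β γ : Fin 2,
      (k + α*(k+l+β+1) + γ) + k = (k+l+β+1)*0 + α*(k+l+β+1) + β*0 + γ := by decide
  have hc2 : ∀ k l α β γ : Fin 2,
      ((k + α*(k+l+β+1) + γ) + 1) + l = (k+l+β+1)*1 + α*(k+l+β+1) + β*1 + γ := by decide
  -- key construction
  have key : ∀ m : Finset (Fin d × Fin 2), ∃ (x0 : Fin X) (i j : Fin d) (a0 k l : Fin 2),
      m ∈ pairM d → i ≠ j ∧ m = {(i,k),(j,l)} ∧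
        P x0 i a0 k = 1/2 ∧ P x0 j (a0+1) l = 1/2 := by
    intro m
    by_cases hm : m ∈ pairM d
    · obtain ⟨q, hq, hqm⟩ := Finset.mem_image.mp hm
      have hlt : q.1 < q.2.1 := (Finset.mem_filter.mp hq).2
      obtain ⟨i, j, k, l⟩ := q
      obtain ⟨x1, x2, -, α, β, γ, hspec⟩ := hPR i j (ne_of_lt hlt)
      refine ⟨if (k+l+β+1 : Fin 2) = 0 then x1 else x2, i, j, k + α*(k+l+β+1) + γ, k, l,
        fun _ => ⟨ne_of_lt hlt, hqm.symm, ?_, ?_⟩⟩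
      · have h := hspec (k+l+β+1) 0 (k + α*(k+l+β+1) + γ) k
        simpa [hc1 k l α β γ] using h
      · have h := hspec (k+l+β+1) 1 ((k + α*(k+l+β+1) + γ) + 1) l
        simpa [hc2 k l α β γ] using h
    · exact ⟨xw, ⟨0, by omega⟩, ⟨0, by omega⟩, 0, 0, 0, fun h => absurd h hm⟩
  choose x0 I J a0 K L hkey using key
  refine ⟨fun x m => if x = x0 m then 1 else 0,
    fun τ' a m => if τ' = (if a = a0 m then I m else J m) then 1 else 0,
    fun y τ' => if y = τ' then 1 else 0,
    fun n _ b => if n = b then 1 else 0,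
    fun x m => by dsimp only; split <;> norm_num,
    fun m => by simp,
    fun τ' a m => by dsimp only; split <;> norm_num <;> split <;> norm_num,
    fun a m => by simp,
    fun y τ' => by dsimp only; split <;> norm_num,
    fun τ' => by simp,
    fun n τ' b => by dsimp only; split <;> norm_num,
    fun τ' b => by simp,
    ?_⟩
  -- the 𝒩 collapse
  have hN : ∀ (m : Finset (Fin d × Fin 2)) (τ' : Fin d) (n : Fin 2),
      (∑ x : Fin X, ∑ a : Fin 2, ∑ y : Fin d, ∑ b : Fin 2,
        (if x = x0 m then (1:ℝ) else 0) * (if τ' = (if a = a0 m then I m else J m) then 1 else 0)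
          * (if y = τ' then 1 else 0) * P x y a b * (if n = b then 1 else 0)) =
      (if τ' = (if 0 = a0 m then I m else J m) then P (x0 m) τ' 0 n else 0)
        + (if τ' = (if 1 = a0 m then I m else J m) then P (x0 m) τ' 1 n else 0) := by
    intro m τ' n
    simp only [mul_ite, ite_mul, mul_one, one_mul, mul_zero, zero_mul,
      Finset.sum_ite_eq, Finset.sum_ite_eq', Finset.mem_univ, if_true, Fin.sum_univ_two,
      Finset.sum_add_distrib, Finset.sum_ite_irrel, Finset.sum_const_zero]
  -- success probability 1 for each m in pairM d
  have hS : ∀ m ∈ pairM d,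
      (∑ p ∈ m, ∑ x : Fin X, ∑ a : Fin 2, ∑ y : Fin d, ∑ b : Fin 2,
        (if x = x0 m then (1:ℝ) else 0)
          * (if p.1 = (if a = a0 m then I m else J m) then 1 else 0)
          * (if y = p.1 then 1 else 0) * P x y a b * (if p.2 = b then 1 else 0)) = 1 := by
    intro m hm
    obtain ⟨hij, hmeq, hPa, hPb⟩ := hkey m hm
    have hne : ((I m, K m) : Fin d × Fin 2) ≠ (J m, L m) :=
      fun h => hij (congrArg Prod.fst h)
    rw [show (∑ p ∈ m, ∑ x : Fin X, ∑ a : Fin 2, ∑ y : Fin d, ∑ b : Fin 2,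
        (if x = x0 m then (1:ℝ) else 0)
          * (if p.1 = (if a = a0 m then I m else J m) then 1 else 0)
          * (if y = p.1 then 1 else 0) * P x y a b * (if p.2 = b then 1 else 0))
        = ∑ p ∈ ({(I m, K m),(J m, L m)} : Finset (Fin d × Fin 2)),
          ∑ x : Fin X, ∑ a : Fin 2, ∑ y : Fin d, ∑ b : Fin 2,
        (if x = x0 m then (1:ℝ) else 0)
          * (if p.1 = (if a = a0 m then I m else J m) then 1 else 0)
          * (if y = p.1 then 1 else 0) * P x y a b * (if p.2 = b then 1 else 0)
      from by rw [← hmeq]]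
    rw [Finset.sum_pair hne]
    rw [hN m (I m) (K m), hN m (J m) (L m)]
    rcases (by decide : ∀ t : Fin 2, t = 0 ∨ t = 1) (a0 m) with h | h
    · rw [h] at hPa hPb ⊢
      simp at hPb
      simp [hij, Ne.symm hij]
      linarith [hPa, hPb]
    · rw [h] at hPa hPb ⊢
      simp at hPb
      simp [hij, Ne.symm hij]
      linarith [hPa, hPb]
  -- injectivity of the encoding q ↦ {(i,k),(j,l)}
  have hinj : ∀ q ∈ Finset.univ.filter (fun q : Fin d × Fin d × Fin 2 × Fin 2 => q.1 < q.2.1),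
      ∀ q' ∈ Finset.univ.filter (fun q : Fin d × Fin d × Fin 2 × Fin 2 => q.1 < q.2.1),
      (fun q : Fin d × Fin d × Fin 2 × Fin 2 =>
        ({(q.1, q.2.2.1), (q.2.1, q.2.2.2)} : Finset (Fin d × Fin 2))) q =
      (fun q : Fin d × Fin d × Fin 2 × Fin 2 =>
        ({(q.1, q.2.2.1), (q.2.1, q.2.2.2)} : Finset (Fin d × Fin 2))) q' → q = q' := by
    rintro ⟨i,j,k,l⟩ hq ⟨i',j',k',l'⟩ hq' heq
    simp only [Finset.mem_filter, Finset.mem_univ, true_and] at hq hq'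
    simp only at heq
    have h1 : ((i,k) : Fin d × Fin 2) ∈ ({(i',k'),(j',l')} : Finset (Fin d × Fin 2)) := by
      rw [← heq]; simp
    have h2 : ((j,l) : Fin d × Fin 2) ∈ ({(i',k'),(j',l')} : Finset (Fin d × Fin 2)) := by
      rw [← heq]; simp
    have h3 : ((i',k') : Fin d × Fin 2) ∈ ({(i,k),(j,l)} : Finset (Fin d × Fin 2)) := by
      rw [heq]; simp
    simp only [Finset.mem_insert, Finset.mem_singleton, Prod.mk.injEq, Prod.ext_iff,
      Fin.ext_iff, Fin.lt_def] at h1 h2 h3 hq hq' ⊢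
    omega
  -- final computation
  set ω : ℝ := 1 / (2 * (d : ℝ) * ((d : ℝ) - 1)) with hω
  have hd2 : (2:ℝ) ≤ (d:ℝ) := by exact_mod_cast hd
  have step1 : pairPayoff d (fun τ' n m =>
      ∑ x : Fin X, ∑ a : Fin 2, ∑ y : Fin d, ∑ b : Fin 2,
        (if x = x0 m then (1:ℝ) else 0)
          * (if τ' = (if a = a0 m then I m else J m) then 1 else 0)
          * (if y = τ' then 1 else 0) * P x y a b * (if n = b then 1 else 0)) =
      ∑ m ∈ pairM d, ω := by
    rw [pairPayoff]
    exact Finset.sum_congr rfl (fun m hm => by rw [← Finset.mul_sum, hS m hm, mul_one])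
  rw [step1, pairM, Finset.sum_image hinj, Finset.sum_filter, Fintype.sum_prod_type]
  have step2 : ∀ i : Fin d, (∑ q : Fin d × Fin 2 × Fin 2, if i < q.1 then ω else 0)
      = ∑ j : Fin d, (if i < j then (1:ℝ) else 0) * (4 * ω) := by
    intro i
    rw [Fintype.sum_prod_type]
    refine Finset.sum_congr rfl fun j _ => ?_
    by_cases hij : i < j <;> simp [hij] <;> ring
  simp only [step2]
  have trich : ∀ i j : Fin d, (if i < j then (1:ℝ) else 0) + (if j < i then 1 else 0)
      + (if i = j then 1 else 0) = 1 := by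
    intro i j
    rcases lt_trichotomy i j with h | h | h
    · simp [h, asymm h, ne_of_lt h]
    · simp [h, lt_irrefl]
    · simp [h, asymm h, ne_of_gt h]
  set T : ℝ := ∑ i : Fin d, ∑ j : Fin d, (if i < j then (1:ℝ) else 0) with hT
  have hswap : ∑ i : Fin d, ∑ j : Fin d, (if j < i then (1:ℝ) else 0) = T :=
    Finset.sum_comm
  have hdiag : ∑ i : Fin d, ∑ j : Fin d, (if i = j then (1:ℝ) else 0) = d := by
    simp [Finset.sum_ite_eq, Finset.card_univ]
  have hsum : ∑ i : Fin d, ∑ j : Fin d, ((if i < j then (1:ℝ) else 0)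
      + (if j < i then 1 else 0) + (if i = j then 1 else 0)) = (d:ℝ) * d := by
    simp only [trich]
    simp [Finset.sum_const, Finset.card_univ, mul_comm]
  have hexp : (∑ i : Fin d, ∑ j : Fin d, ((if i < j then (1:ℝ) else 0)
      + (if j < i then 1 else 0) + (if i = j then 1 else 0)))
      = T + (∑ i : Fin d, ∑ j : Fin d, (if j < i then (1:ℝ) else 0))
        + (∑ i : Fin d, ∑ j : Fin d, (if i = j then (1:ℝ) else 0)) := by
    simp [Finset.sum_add_distrib, hT]
  rw [hexp, hswap, hdiag] at hsum
  have hTval : T + T + (d:ℝ) = (d:ℝ) * d := hsum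
  have hfin : ∑ i : Fin d, ∑ j : Fin d, (if i < j then (1:ℝ) else 0) * (4 * ω) = T * (4 * ω) := by
    rw [hT, Finset.sum_mul]
    exact Finset.sum_congr rfl fun i _ => by rw [Finset.sum_mul]
  rw [hfin, hω]
  have h0 : (d:ℝ) ≠ 0 := by linarith
  have h1 : (d:ℝ) - 1 ≠ 0 := by intro h; nlinarith
  have hTv : T = ((d:ℝ) * d - d) / 2 := by linarith
  rw [hTv]
  field_simp
  ring
end

section
/- Noise robustness for the pair-relation task (Corollary 3): Let d ≥ 2 and let P* be a no-signalling correlation with Alice inputs Fin X, Alice outputs {0,1}, Bob inputs Fin d, Bob outputs {0,1}, satisfying the PR-box restriction property: for every pair y' ≠ y'' in Fin d there exist x' ≠ x'' in Fin X and (α,β,γ) ∈ {0,1}³ such that for all x̂,ŷ,a,b ∈ {0,1}, P* x y a b = 1/2 if a ⊕ b = x̂·ŷ ⊕ α·x̂ ⊕ β·ŷ ⊕ γ and 0 otherwise (with x = x' when x̂ = 0, x = x'' when x̂ = 1, y = y' when ŷ = 0, y = y'' when ŷ = 1). Let P_WN be the white-noise correlation P_WN x y a b = 1/4. If 1/2 <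 p ≤ 1, then there exists a (p·P* + (1-p)·P_WN)-assisted wire-reading strategy for the pair-relation task on (d,2) (input set M = {R_{i j k l} = {(i,k),(j,l)} : i < j in Fin d, k,l ∈ Fin 2}, weights ω m = 1/(2d(d-1))) whose payoff equals p + (1-p)/2, which is strictly greater than 3/4 (the shared-randomness bound). -/
open Finset

/-! For the relation `{(i,k),(j,l)}` with `i < j`, Alice feeds the PR box on Bob's inputs `i, j`
with the input that correlates her output `a` with Bob's output `b` so that `b = k` when `a = a₀`
and Bob's input is `i`, and `b = l` when `a = a₀ + 1` and Bob's input is `j`. She sends `i` if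
`a = a₀` and `j` otherwise; Bob uses the received wire as his box input and outputs `b`. With the
box the pair relation is then won with certainty, with white noise Bob's output is a fair coin, so
each relation is won with probability `p + (1 - p)/2`, which beats `3/4` once `p > 1/2`. -/

section PairRelations

variable {ι κ : Type*} [LinearOrder ι]

lemma card_filter_fst_lt_fst_snd [Fintype ι] [Fintype κ] :
    #{q : ι × ι × κ | q.1 < q.2.1} = (Fintype.card ι).choose 2 * Fintype.card κ := by
  rw [← Fintype.card_product_filter_lt, ← card_univ, ← card_product]
  exact card_equiv (Equiv.prodAssoc ι ι κ).symm fun q => by simp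

lemma eq_of_pair_eq_pair_of_lt [DecidableEq κ] {i j i' j' : ι} {k l k' l' : κ}
    (hij : i < j) (hij' : i' < j')
    (h : ({(i, k), (j, l)} : Finset (ι × κ)) = {(i', k'), (j', l')}) :
    i = i' ∧ j = j' ∧ k = k' ∧ l = l' := by
  have hik : (i, k) ∈ ({(i', k'), (j', l')} : Finset (ι × κ)) := by rw [← h]; simp
  have hjl : (j, l) ∈ ({(i', k'), (j', l')} : Finset (ι × κ)) := by rw [← h]; simp
  simp only [mem_insert, mem_singleton, Prod.mk.injEq] at hik hjl
  rcases hik with ⟨rfl, rfl⟩ | ⟨rfl, rfl⟩ <;> rcases hjl with ⟨rfl, rfl⟩ | ⟨rfl, rfl⟩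
  · exact absurd hij (lt_irrefl _)
  · exact ⟨rfl, rfl, rfl, rfl⟩
  · exact absurd hij (lt_asymm hij')
  · exact absurd hij (lt_irrefl _)

end PairRelations

lemma sum_pairM {M : Type*} [AddCommMonoid M] (d : ℕ) (f : Finset (Fin d × Fin 2) → M) :
    ∑ m ∈ pairM d, f m =
      ∑ q : Fin d × Fin d × Fin 2 × Fin 2 with q.1 < q.2.1, f {(q.1, q.2.2.1), (q.2.1, q.2.2.2)} :=
  sum_image <| by
    rintro ⟨i, j, k, l⟩ hq ⟨i', j', k', l'⟩ hq' h
    obtain ⟨rfl, rfl, rfl, rfl⟩ :=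
      eq_of_pair_eq_pair_of_lt (mem_filter.mp hq).2 (mem_filter.mp hq').2 h
    rfl

lemma pairPayoff_eq_of_forall_pair {d : ℕ} (hd : 2 ≤ d)
    {𝒩 : Fin d → Fin 2 → Finset (Fin d × Fin 2) → ℝ} {s : ℝ}
    (h : ∀ (i j : Fin d) (k l : Fin 2), i < j →
      ∑ t ∈ ({(i, k), (j, l)} : Finset (Fin d × Fin 2)), 𝒩 t.1 t.2 {(i, k), (j, l)} = s) :
    pairPayoff d 𝒩 = s := by
  have hd' : (d : ℝ) - 1 ≠ 0 := by
    have : (2 : ℝ) ≤ d := by exact_mod_cast hd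
    linarith
  simp only [pairPayoff, ← mul_sum]
  rw [sum_pairM, sum_congr rfl fun _ hq => h _ _ _ _ (mem_filter.mp hq).2, sum_const,
    card_filter_fst_lt_fst_snd, nsmul_eq_mul]
  simp only [Fintype.card_fin, Fintype.card_prod, Nat.cast_mul, Nat.cast_choose_two]
  field_simp
  ring

section PRBox

variable {A B : Type*}

def IsPRBoxOn (P : A → B → Fin 2 → Fin 2 → ℝ) (x' x'' : A) (y' y'' : B) : Prop :=
  ∃ α β γ : Fin 2, ∀ xh yh a b : Fin 2,
    P (if xh = 0 then x' else x'') (if yh = 0 then y' else y'') a b =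
      if a + b = xh * yh + α * xh + β * yh + γ then 1 / 2 else 0

lemma IsPRBoxOn.exists_steering {P : A → B → Fin 2 → Fin 2 → ℝ} {x' x'' : A} {y' y'' : B}
    (hP : IsPRBoxOn P x' x'' y' y'') (k l : Fin 2) :
    ∃ x a, P x y' a k = 1 / 2 ∧ P x y'' (a + 1) l = 1 / 2 := by
  obtain ⟨α, β, γ, hbox⟩ := hP
  -- From Bob's input `y'` to `y''` the parity `a + b` shifts by `xh + β`; take `xh = k + l + β + 1`.
  have h₀ := hbox (k + l + β + 1) 0 (k + α * (k + l + β + 1) + γ) k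
  have h₁ := hbox (k + l + β + 1) 1 (k + α * (k + l + β + 1) + γ + 1) l
  rw [if_pos rfl] at h₀
  rw [if_neg one_ne_zero] at h₁
  refine ⟨_, _, h₀.trans (if_pos ?_), h₁.trans (if_pos ?_)⟩ <;>
    · clear h₀ h₁ hbox
      revert k l α β γ
      decide

end PRBox

lemma sum_deterministic_wire_reading {A B O O' : Type*} [Fintype A] [Fintype B] [Fintype O]
    [Fintype O'] [DecidableEq A] [DecidableEq B] [DecidableEq O']
    (Q : A → B → O → O' → ℝ) (x₀ : A) (enc : O → B) (τ : B) (n : O') :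
    ∑ x, ∑ a, ∑ y, ∑ b, (if x = x₀ then 1 else 0) * (if τ = enc a then 1 else 0) *
      (if y = τ then 1 else 0) * Q x y a b * (if n = b then 1 else 0) =
      ∑ a, if τ = enc a then Q x₀ τ a n else 0 := by
  simp only [ite_mul, mul_ite, one_mul, mul_one, zero_mul, mul_zero, sum_ite_eq, sum_ite_eq',
    mem_univ, if_true]
  rw [sum_comm]
  exact sum_congr rfl fun a _ => by split_ifs <;> simp

lemma sum_pair_wire {B : Type*} [DecidableEq B] {i j : B} (hij : i ≠ j) (a₀ k l : Fin 2)
    (Q : B × Fin 2 → Fin 2 → ℝ) :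
    ∑ t ∈ ({(i, k), (j, l)} : Finset (B × Fin 2)),
      ∑ a, (if t.1 = (if a = a₀ then i else j) then Q t a else 0) =
      Q (i, k) a₀ + Q (j, l) (a₀ + 1) := by
  rw [sum_pair (by simp [hij])]
  fin_cases a₀ <;> simp [Fin.sum_univ_two, hij, hij.symm]

lemma exists_pairM_steering {A : Type*} {d : ℕ} (hd : 2 ≤ d)
    {P : A → Fin d → Fin 2 → Fin 2 → ℝ}
    (hPR : ∀ i j : Fin d, i < j → ∃ x' x'', IsPRBoxOn P x' x'' i j) :
    ∃ (xsel : Finset (Fin d × Fin 2) → A) (asel : Finset (Fin d × Fin 2) → Fin 2)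
      (isel jsel : Finset (Fin d × Fin 2) → Fin d),
      ∀ (i j : Fin d) (k l : Fin 2), i < j →
        isel {(i, k), (j, l)} = i ∧ jsel {(i, k), (j, l)} = j ∧
        P (xsel {(i, k), (j, l)}) i (asel {(i, k), (j, l)}) k = 1 / 2 ∧
        P (xsel {(i, k), (j, l)}) j (asel {(i, k), (j, l)} + 1) l = 1 / 2 := by
  obtain ⟨x₀, -⟩ := hPR ⟨0, by omega⟩ ⟨1, by omega⟩ (by simp [Fin.lt_def])
  have hlocal : ∀ m : Finset (Fin d × Fin 2), ∃ (x : A) (a₀ : Fin 2) (i j : Fin d),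
      ∀ (i' j' : Fin d) (k l : Fin 2), i' < j' → m = {(i', k), (j', l)} →
        i = i' ∧ j = j' ∧ P x i' a₀ k = 1 / 2 ∧ P x j' (a₀ + 1) l = 1 / 2 := by
    intro m
    by_cases hm : ∃ (i j : Fin d) (k l : Fin 2), i < j ∧ m = {(i, k), (j, l)}
    · obtain ⟨i, j, k, l, hij, rfl⟩ := hm
      obtain ⟨_, _, hbox⟩ := hPR i j hij
      obtain ⟨x, a₀, hx⟩ := hbox.exists_steering k l
      refine ⟨x, a₀, i, j, fun i' j' k' l' hij' hm' => ?_⟩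
      obtain ⟨rfl, rfl, rfl, rfl⟩ := eq_of_pair_eq_pair_of_lt hij hij' hm'
      exact ⟨rfl, rfl, hx⟩
    · exact ⟨x₀, 0, ⟨0, by omega⟩, ⟨0, by omega⟩,
        fun i j k l hij hm' => absurd ⟨i, j, k, l, hij, hm'⟩ hm⟩
  choose xsel asel isel jsel hsel using hlocal
  exact ⟨xsel, asel, isel, jsel, fun i j k l hij => hsel _ i j k l hij rfl⟩

theorem noisy_PR_advantage_pair_relation_general
    (d X : ℕ) (hd : 2 ≤ d)
    (Pstar : Fin X → Fin d → Fin 2 → Fin 2 → ℝ)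
    (hPR : ∀ y' y'' : Fin d, y' ≠ y'' →
      ∃ x' x'' : Fin X, x' ≠ x'' ∧ ∃ α β γ : Fin 2,
        ∀ xh yh a b : Fin 2,
          Pstar (if xh = 0 then x' else x'') (if yh = 0 then y' else y'') a b =
            if a + b = xh * yh + α * xh + β * yh + γ then 1 / 2 else 0)
    (p : ℝ) (hp1 : 1 / 2 < p) :
    ∃ (px : Fin X → Finset (Fin d × Fin 2) → ℝ)
      (pe : Fin d → Fin 2 → Finset (Fin d × Fin 2) → ℝ)
      (py : Fin d → Fin d → ℝ)
      (pd : Fin 2 → Fin d → Fin 2 → ℝ),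
      (∀ x m, 0 ≤ px x m) ∧ (∀ m, ∑ x : Fin X, px x m = 1) ∧
      (∀ τ' a m, 0 ≤ pe τ' a m) ∧ (∀ a m, ∑ τ' : Fin d, pe τ' a m = 1) ∧
      (∀ y τ', 0 ≤ py y τ') ∧ (∀ τ', ∑ y : Fin d, py y τ' = 1) ∧
      (∀ n τ' b, 0 ≤ pd n τ' b) ∧ (∀ τ' b, ∑ n : Fin 2, pd n τ' b = 1) ∧
      pairPayoff d (fun τ' n m =>
        ∑ x : Fin X, ∑ a : Fin 2, ∑ y : Fin d, ∑ b : Fin 2,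
          px x m * pe τ' a m * py y τ' *
            (p * Pstar x y a b + (1 - p) * (1 / 4)) * pd n τ' b)
        = p + (1 - p) / 2 ∧
      p + (1 - p) / 2 > 3 / 4 := by
  obtain ⟨xsel, asel, isel, jsel, hsel⟩ := exists_pairM_steering hd fun i j hij =>
    (hPR i j hij.ne).imp fun _ => Exists.imp fun _ => And.right
  refine ⟨fun x m => if x = xsel m then 1 else 0,
    fun τ' a m => if τ' = (if a = asel m then isel m else jsel m) then 1 else 0,
    fun y τ' => if y = τ' then 1 else 0, fun n _ b => if n = b then 1 else 0,
    fun _ _ => by positivity, fun _ => by simp, fun _ _ _ => by positivity, fun _ _ => by simp,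
    fun _ _ => by positivity, fun _ => by simp, fun _ _ _ => by positivity, fun _ _ => by simp,
    pairPayoff_eq_of_forall_pair hd fun i j k l hij => ?_, by linarith⟩
  obtain ⟨hi, hj, hPi, hPj⟩ := hsel i j k l hij
  simp only [sum_deterministic_wire_reading]
  rw [hi, hj]
  simp only [sum_pair_wire hij.ne]
  rw [hPi, hPj]
  ring

/-- Noise robustness for the pair-relation task (Corollary 3): for `1/2 < p ≤ 1`,
the noisy correlation `p·P* + (1-p)·P_WN` admits a strategy with payoff
`p + (1-p)/2 > 3/4`. Addition and multiplication on `Fin 2` are mod 2. -/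
theorem noisy_PR_advantage_pair_relation
    (d X : ℕ) (hd : 2 ≤ d)
    (Pstar : Fin X → Fin d → Fin 2 → Fin 2 → ℝ)
    (hP0 : ∀ x y a b, 0 ≤ Pstar x y a b)
    (hP1 : ∀ x y, ∑ a : Fin 2, ∑ b : Fin 2, Pstar x y a b = 1)
    (hNSA : ∀ x a y₁ y₂, ∑ b : Fin 2, Pstar x y₁ a b = ∑ b : Fin 2, Pstar x y₂ a b)
    (hNSB : ∀ y b x₁ x₂, ∑ a : Fin 2, Pstar x₁ y a b = ∑ a : Fin 2, Pstar x₂ y a b)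
    (hPR : ∀ y' y'' : Fin d, y' ≠ y'' →
      ∃ x' x'' : Fin X, x' ≠ x'' ∧ ∃ α β γ : Fin 2,
        ∀ xh yh a b : Fin 2,
          Pstar (if xh = 0 then x' else x'') (if yh = 0 then y' else y'') a b =
            if a + b = xh * yh + α * xh + β * yh + γ then 1 / 2 else 0)
    (p : ℝ) (hp1 : 1 / 2 < p) (hp2 : p ≤ 1) :
    ∃ (px : Fin X → Finset (Fin d × Fin 2) → ℝ)
      (pe : Fin d → Fin 2 → Finset (Fin d × Fin 2) → ℝ)
      (py : Fin d → Fin d → ℝ)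
      (pd : Fin 2 → Fin d → Fin 2 → ℝ),
      (∀ x m, 0 ≤ px x m) ∧ (∀ m, ∑ x : Fin X, px x m = 1) ∧
      (∀ τ' a m, 0 ≤ pe τ' a m) ∧ (∀ a m, ∑ τ' : Fin d, pe τ' a m = 1) ∧
      (∀ y τ', 0 ≤ py y τ') ∧ (∀ τ', ∑ y : Fin d, py y τ' = 1) ∧
      (∀ n τ' b, 0 ≤ pd n τ' b) ∧ (∀ τ' b, ∑ n : Fin 2, pd n τ' b = 1) ∧
      pairPayoff d (fun τ' n m =>
        ∑ x : Fin X, ∑ a : Fin 2, ∑ y : Fin d, ∑ b : Fin 2,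
          px x m * pe τ' a m * py y τ' *
            (p * Pstar x y a b + (1 - p) * (1 / 4)) * pd n τ' b)
        = p + (1 - p) / 2 ∧
      p + (1 - p) / 2 > 3 / 4 :=
  noisy_PR_advantage_pair_relation_general d X hd Pstar hPR p hp1
end

section
/- I3322-facet correlations win the 3-input pair-relation task perfectly (Corollary 4): Define correlations P₁, P₂ with Alice inputs x ∈ {1,2,3}, Bob inputs y ∈ {1,2,3}, and outputs a,b ∈ {1,2}: P₁ x y a b = (1/2)·(if a = b then 1 else 0) when (x,y) ∈ {(1,1),(1,2),(2,1),(2,2),(2,3),(3,2),(3,3)} and P₁ x y a b = (1/2)·(if a ≠ b then 1 else 0) otherwise; P₂ x y a b = (1/2)·(if a = b then 1 else 0) when (x,y) ∈ {(1,1),(1,2),(2,1),(2,2),(2,3),(3,2)} and P₂ x y a b = (1/2)·(if a ≠ b then 1 else 0) otherwise. Then for every q ∈ [0,1], setting P = q·P₁ + (1-q)·P₂, there exists a P-assisted wire-reading strategy for the pair-relation task on (3,2) (input set M = {R_{i j k l} = {(i,k),(j,l)} : i < j in Fin 3, k,l ∈ Fin 2}, weights ω m = 1/12) whose payoff satisfies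 S_W(𝒩) = 1. -/
open Finset

/-- The extremal correlation `P₁` maximally violating I3322 (inputs `1,2,3` are
represented as `0,1,2 : Fin 3`, outputs `1,2` as `0,1 : Fin 2`). -/
noncomputable def P1 (x y : Fin 3) (a b : Fin 2) : ℝ :=
  if (x, y) ∈ ({(0, 0), (0, 1), (1, 0), (1, 1), (1, 2), (2, 1), (2, 2)} :
      Finset (Fin 3 × Fin 3)) then
    (1 / 2) * (if a = b then 1 else 0)
  else
    (1 / 2) * (if a ≠ b then 1 else 0)

/-- The extremal correlation `P₂` maximally violating I3322 (inputs `1,2,3` are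
represented as `0,1,2 : Fin 3`, outputs `1,2` as `0,1 : Fin 2`). -/
noncomputable def P2 (x y : Fin 3) (a b : Fin 2) : ℝ :=
  if (x, y) ∈ ({(0, 0), (0, 1), (1, 0), (1, 1), (1, 2), (2, 1)} :
      Finset (Fin 3 × Fin 3)) then
    (1 / 2) * (if a = b then 1 else 0)
  else
    (1 / 2) * (if a ≠ b then 1 else 0)

def rowI (m : Finset (Fin 3 × Fin 2)) : Fin 3 :=
  if ((0,0) : Fin 3 × Fin 2) ∈ m ∨ ((0,1) : Fin 3 × Fin 2) ∈ m then 0 else 1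

def rowJ (m : Finset (Fin 3 × Fin 2)) : Fin 3 :=
  if ((2,0) : Fin 3 × Fin 2) ∈ m ∨ ((2,1) : Fin 3 × Fin 2) ∈ m then 2 else 1

def bitAt (m : Finset (Fin 3 × Fin 2)) (i : Fin 3) : Fin 2 :=
  if (i, (0 : Fin 2)) ∈ m then 0 else 1

def cfun : Fin 3 → Fin 3 → Fin 2 := ![![0,0,1],![0,0,0],![1,0,0]]

def Xof (m : Finset (Fin 3 × Fin 2)) : Fin 3 :=
  if rowJ m = 1 then (if 1 + bitAt m (rowI m) + bitAt m (rowJ m) = 0 then 0 else 2)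
  else (if 1 + bitAt m (rowI m) + bitAt m (rowJ m) = 0 then 1 else 0)

def sof (m : Finset (Fin 3 × Fin 2)) : Fin 2 := cfun (Xof m) (rowI m) + bitAt m (rowI m)

lemma collapse (G : Fin 3 → Fin 3 → Fin 2 → Fin 2 → ℝ) (X : Fin 3) (s : Fin 2)
    (I J : Fin 3) (τ' : Fin 3) (n : Fin 2) :
    (∑ x : Fin 3, ∑ a : Fin 2, ∑ y : Fin 3, ∑ b : Fin 2,
      (if x = X then (1:ℝ) else 0) *
        (if τ' = (if a = s then I else J) then 1 else 0) *
        (if y = τ' then 1 else 0) * G x y a b * (if n = b then 1 else 0))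
    = ∑ a : Fin 2, (if τ' = (if a = s then I else J) then (1:ℝ) else 0) * G X τ' a n := by
  rw [Finset.sum_comm]
  congr 1
  ext a
  simp only [ite_mul, one_mul, zero_mul, mul_ite, mul_zero, mul_one]
  by_cases h : τ' = (if a = s then I else J) <;>
    simp [h, Finset.sum_ite_eq, Finset.sum_ite_eq']

lemma ev0 : rowI ({(0,0), (1,0)} : Finset (Fin 3 × Fin 2)) = 0 := by decide
lemma ev1 : rowJ ({(0,0), (1,0)} : Finset (Fin 3 × Fin 2)) = 1 := by decide
lemma ev2 : Xof ({(0,0), (1,0)} : Finset (Fin 3 × Fin 2)) = 2 := by decide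
lemma ev3 : sof ({(0,0), (1,0)} : Finset (Fin 3 × Fin 2)) = 1 := by decide
lemma ev4 : rowI ({(0,0), (1,1)} : Finset (Fin 3 × Fin 2)) = 0 := by decide
lemma ev5 : rowJ ({(0,0), (1,1)} : Finset (Fin 3 × Fin 2)) = 1 := by decide
lemma ev6 : Xof ({(0,0), (1,1)} : Finset (Fin 3 × Fin 2)) = 0 := by decide
lemma ev7 : sof ({(0,0), (1,1)} : Finset (Fin 3 × Fin 2)) = 0 := by decide
lemma ev8 : rowI ({(0,1), (1,0)} : Finset (Fin 3 × Fin 2)) = 0 := by decide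
lemma ev9 : rowJ ({(0,1), (1,0)} : Finset (Fin 3 × Fin 2)) = 1 := by decide
lemma ev10 : Xof ({(0,1), (1,0)} : Finset (Fin 3 × Fin 2)) = 0 := by decide
lemma ev11 : sof ({(0,1), (1,0)} : Finset (Fin 3 × Fin 2)) = 1 := by decide
lemma ev12 : rowI ({(0,1), (1,1)} : Finset (Fin 3 × Fin 2)) = 0 := by decide
lemma ev13 : rowJ ({(0,1), (1,1)} : Finset (Fin 3 × Fin 2)) = 1 := by decide
lemma ev14 : Xof ({(0,1), (1,1)} : Finset (Fin 3 × Fin 2)) = 2 := by decide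
lemma ev15 : sof ({(0,1), (1,1)} : Finset (Fin 3 × Fin 2)) = 0 := by decide
lemma ev16 : rowI ({(0,0), (2,0)} : Finset (Fin 3 × Fin 2)) = 0 := by decide
lemma ev17 : rowJ ({(0,0), (2,0)} : Finset (Fin 3 × Fin 2)) = 2 := by decide
lemma ev18 : Xof ({(0,0), (2,0)} : Finset (Fin 3 × Fin 2)) = 0 := by decide
lemma ev19 : sof ({(0,0), (2,0)} : Finset (Fin 3 × Fin 2)) = 0 := by decide
lemma ev20 : rowI ({(0,0), (2,1)} : Finset (Fin 3 × Fin 2)) = 0 := by decide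
lemma ev21 : rowJ ({(0,0), (2,1)} : Finset (Fin 3 × Fin 2)) = 2 := by decide
lemma ev22 : Xof ({(0,0), (2,1)} : Finset (Fin 3 × Fin 2)) = 1 := by decide
lemma ev23 : sof ({(0,0), (2,1)} : Finset (Fin 3 × Fin 2)) = 0 := by decide
lemma ev24 : rowI ({(0,1), (2,0)} : Finset (Fin 3 × Fin 2)) = 0 := by decide
lemma ev25 : rowJ ({(0,1), (2,0)} : Finset (Fin 3 × Fin 2)) = 2 := by decide
lemma ev26 : Xof ({(0,1), (2,0)} : Finset (Fin 3 × Fin 2)) = 1 := by decide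
lemma ev27 : sof ({(0,1), (2,0)} : Finset (Fin 3 × Fin 2)) = 1 := by decide
lemma ev28 : rowI ({(0,1), (2,1)} : Finset (Fin 3 × Fin 2)) = 0 := by decide
lemma ev29 : rowJ ({(0,1), (2,1)} : Finset (Fin 3 × Fin 2)) = 2 := by decide
lemma ev30 : Xof ({(0,1), (2,1)} : Finset (Fin 3 × Fin 2)) = 0 := by decide
lemma ev31 : sof ({(0,1), (2,1)} : Finset (Fin 3 × Fin 2)) = 1 := by decide
lemma ev32 : rowI ({(1,0), (2,0)} : Finset (Fin 3 × Fin 2)) = 1 := by decide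
lemma ev33 : rowJ ({(1,0), (2,0)} : Finset (Fin 3 × Fin 2)) = 2 := by decide
lemma ev34 : Xof ({(1,0), (2,0)} : Finset (Fin 3 × Fin 2)) = 0 := by decide
lemma ev35 : sof ({(1,0), (2,0)} : Finset (Fin 3 × Fin 2)) = 0 := by decide
lemma ev36 : rowI ({(1,0), (2,1)} : Finset (Fin 3 × Fin 2)) = 1 := by decide
lemma ev37 : rowJ ({(1,0), (2,1)} : Finset (Fin 3 × Fin 2)) = 2 := by decide
lemma ev38 : Xof ({(1,0), (2,1)} : Finset (Fin 3 × Fin 2)) = 1 := by decide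
lemma ev39 : sof ({(1,0), (2,1)} : Finset (Fin 3 × Fin 2)) = 0 := by decide
lemma ev40 : rowI ({(1,1), (2,0)} : Finset (Fin 3 × Fin 2)) = 1 := by decide
lemma ev41 : rowJ ({(1,1), (2,0)} : Finset (Fin 3 × Fin 2)) = 2 := by decide
lemma ev42 : Xof ({(1,1), (2,0)} : Finset (Fin 3 × Fin 2)) = 1 := by decide
lemma ev43 : sof ({(1,1), (2,0)} : Finset (Fin 3 × Fin 2)) = 1 := by decide
lemma ev44 : rowI ({(1,1), (2,1)} : Finset (Fin 3 × Fin 2)) = 1 := by decide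
lemma ev45 : rowJ ({(1,1), (2,1)} : Finset (Fin 3 × Fin 2)) = 2 := by decide
lemma ev46 : Xof ({(1,1), (2,1)} : Finset (Fin 3 × Fin 2)) = 0 := by decide
lemma ev47 : sof ({(1,1), (2,1)} : Finset (Fin 3 × Fin 2)) = 1 := by decide


set_option maxHeartbeats 1000000 in
/-- I3322-facet correlations win the 3-input pair-relation task perfectly
(Corollary 4). -/
theorem I3322_facet_wins_pair_relation
    (q : ℝ) (hq0 : 0 ≤ q) (hq1 : q ≤ 1) :
    ∃ (px : Fin 3 → Finset (Fin 3 × Fin 2) → ℝ)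
      (pe : Fin 3 → Fin 2 → Finset (Fin 3 × Fin 2) → ℝ)
      (py : Fin 3 → Fin 3 → ℝ)
      (pd : Fin 2 → Fin 3 → Fin 2 → ℝ),
      (∀ x m, 0 ≤ px x m) ∧ (∀ m, ∑ x : Fin 3, px x m = 1) ∧
      (∀ τ' a m, 0 ≤ pe τ' a m) ∧ (∀ a m, ∑ τ' : Fin 3, pe τ' a m = 1) ∧
      (∀ y τ', 0 ≤ py y τ') ∧ (∀ τ', ∑ y : Fin 3, py y τ' = 1) ∧
      (∀ n τ' b, 0 ≤ pd n τ' b) ∧ (∀ τ' b, ∑ n : Fin 2, pd n τ' b = 1) ∧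
      pairPayoff 3 (fun τ' n m =>
        ∑ x : Fin 3, ∑ a : Fin 2, ∑ y : Fin 3, ∑ b : Fin 2,
          px x m * pe τ' a m * py y τ' *
            (q * P1 x y a b + (1 - q) * P2 x y a b) * pd n τ' b) = 1 := by
  refine ⟨fun x m => if x = Xof m then 1 else 0,
    fun τ' a m => if τ' = (if a = sof m then rowI m else rowJ m) then 1 else 0,
    fun y τ' => if y = τ' then 1 else 0,
    fun n τ' b => if n = b then 1 else 0,
    fun x m => by dsimp only; split <;> norm_num,
    fun m => by rw [Finset.sum_ite_eq' Finset.univ (Xof m) (fun _ => (1:ℝ))]; simp,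
    fun τ' a m => by dsimp only; split <;> split <;> norm_num,
    fun a m => by rw [Finset.sum_ite_eq' Finset.univ _ (fun _ => (1:ℝ))]; simp,
    fun y τ' => by dsimp only; split <;> norm_num,
    fun τ' => by rw [Finset.sum_ite_eq' Finset.univ τ' (fun _ => (1:ℝ))]; simp,
    fun n τ' b => by dsimp only; split <;> norm_num,
    fun τ' b => by rw [Finset.sum_ite_eq' Finset.univ b (fun _ => (1:ℝ))]; simp, ?_⟩
  have hinj : ∀ x ∈ ((Finset.univ : Finset (Fin 3 × Fin 3 × Fin 2 × Fin 2)).filter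
      (fun q => q.1 < q.2.1)), ∀ y ∈ ((Finset.univ : Finset (Fin 3 × Fin 3 × Fin 2 × Fin 2)).filter
      (fun q => q.1 < q.2.1)),
      ({(x.1, x.2.2.1), (x.2.1, x.2.2.2)} : Finset (Fin 3 × Fin 2))
        = {(y.1, y.2.2.1), (y.2.1, y.2.2.2)} → x = y := by decide
  rw [pairPayoff, pairM, Finset.sum_image hinj]
  rw [Finset.sum_congr rfl (g := fun _ => (1/12 : ℝ)) ?_, Finset.sum_const]
  · have hcard : ((Finset.univ : Finset (Fin 3 × Fin 3 × Fin 2 × Fin 2)).filter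
        (fun q => q.1 < q.2.1)).card = 12 := by decide
    rw [hcard]; norm_num
  · intro t ht
    fin_cases ht <;>
      · rw [Finset.sum_pair (by decide)]
        simp only [collapse]
        simp (config := { decide := true }) only [Fin.sum_univ_two, P1, P2]
        norm_num
        try ring
end

section
/- Noise robustness for the I3322 task (Corollary 5): Let P₁, P₂ be the correlations with Alice inputs x ∈ {1,2,3}, Bob inputs y ∈ {1,2,3}, outputs a,b ∈ {1,2}, defined by P₁ x y a b = (1/2)·(if a = b then 1 else 0) when (x,y) ∈ {(1,1),(1,2),(2,1),(2,2),(2,3),(3,2),(3,3)} and (1/2)·(if a ≠ b then 1 else 0) otherwise, and P₂ x y a b = (1/2)·(if a = b then 1 else 0) when (x,y) ∈ {(1,1),(1,2),(2,1),(2,2),(2,3),(3,2)} and (1/2)·(if a ≠ b then 1 else 0) otherwise. Let q ∈ [0,1], P_NL = q·P₁ + (1-q)·P₂, and let P_WN be the white-noise correlation P_WN x y a b = 1/4. If 1/2 < p ≤ 1, then there exists a (p·P_NL + (1-p)·P_WN)-assisted wire-reading strategy for the pair-relation task on (3,2) (input set M = {R_{i j k l} = {(i,k),(j,l)} : i < j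 in Fin 3, k,l ∈ Fin 2}, weights ω m = 1/12) whose payoff is strictly greater than 3/4 (the shared-randomness bound). -/
open Finset

/-- Alice's pairs `{(0,k),(1,k)}` (equal bits on inputs 0,1) need special treatment. -/
def S01 (m : Finset (Fin 3 × Fin 2)) : Prop :=
  ((0,0) ∈ m ∧ (1,0) ∈ m) ∨ ((0,1) ∈ m ∧ (1,1) ∈ m)

instance : DecidablePred S01 := fun m => by unfold S01; infer_instance

/-- Alice's choice of input `x` as a function of her task input `m`. -/
def fX (m : Finset (Fin 3 × Fin 2)) : Fin 3 :=
  if S01 m then 2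
  else if ((1,0) ∈ m ∧ (2,0) ∈ m) ∨ ((1,1) ∈ m ∧ (2,1) ∈ m)
       ∨ ((0,0) ∈ m ∧ (2,0) ∈ m) ∨ ((0,1) ∈ m ∧ (2,1) ∈ m) then 0
  else 1

/-- Alice's encoding: the message sent given her output `a` and her input `m`. -/
def gE (a : Fin 2) (m : Finset (Fin 3 × Fin 2)) : Fin 3 :=
  if S01 m then (if (1,a) ∈ m then 1 else 0)
  else if (0,a) ∈ m then 0 else if (1,a) ∈ m then 1 else 2

set_option maxHeartbeats 1000000 in
/-- Noise robustness for the I3322 task (Corollary 5): for `1/2 < p ≤ 1`, the noisy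
correlation `p·(q·P₁ + (1-q)·P₂) + (1-p)·P_WN` admits a strategy with payoff
strictly greater than `3/4`. -/
theorem I3322_noise_robustness
    (q : ℝ) (hq0 : 0 ≤ q) (hq1 : q ≤ 1)
    (p : ℝ) (hp1 : 1 / 2 < p) (hp2 : p ≤ 1) :
    ∃ (px : Fin 3 → Finset (Fin 3 × Fin 2) → ℝ)
      (pe : Fin 3 → Fin 2 → Finset (Fin 3 × Fin 2) → ℝ)
      (py : Fin 3 → Fin 3 → ℝ)
      (pd : Fin 2 → Fin 3 → Fin 2 → ℝ),
      (∀ x m, 0 ≤ px x m) ∧ (∀ m, ∑ x : Fin 3, px x m = 1) ∧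
      (∀ τ' a m, 0 ≤ pe τ' a m) ∧ (∀ a m, ∑ τ' : Fin 3, pe τ' a m = 1) ∧
      (∀ y τ', 0 ≤ py y τ') ∧ (∀ τ', ∑ y : Fin 3, py y τ' = 1) ∧
      (∀ n τ' b, 0 ≤ pd n τ' b) ∧ (∀ τ' b, ∑ n : Fin 2, pd n τ' b = 1) ∧
      pairPayoff 3 (fun τ' n m =>
        ∑ x : Fin 3, ∑ a : Fin 2, ∑ y : Fin 3, ∑ b : Fin 2,
          px x m * pe τ' a m * py y τ' *
            (p * (q * P1 x y a b + (1 - q) * P2 x y a b)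
              + (1 - p) * (1 / 4)) * pd n τ' b) > 3 / 4 := by
  refine ⟨fun x m => if x = fX m then 1 else 0,
    fun τ a m => if τ = gE a m then 1 else 0,
    fun y τ => if y = τ then 1 else 0,
    fun n _ b => if n = b then 1 else 0,
    fun x m => by positivity,
    fun m => by simp [Finset.sum_ite_eq'],
    fun τ a m => by positivity,
    fun a m => by simp [Finset.sum_ite_eq'],
    fun y τ => by positivity,
    fun τ => by simp [Finset.sum_ite_eq'],
    fun n τ b => by positivity,
    fun τ b => by simp [Finset.sum_ite_eq'],
    ?_⟩
  have hN : ∀ (m : Finset (Fin 3 × Fin 2)) (τ : Fin 3) (n : Fin 2),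
      (∑ x : Fin 3, ∑ a : Fin 2, ∑ y : Fin 3, ∑ b : Fin 2,
        (if x = fX m then (1:ℝ) else 0) * (if τ = gE a m then 1 else 0) *
          (if y = τ then 1 else 0) *
          (p * (q * P1 x y a b + (1 - q) * P2 x y a b)
            + (1 - p) * (1 / 4)) * (if n = b then 1 else 0))
      = ∑ a : Fin 2, (if τ = gE a m then 1 else 0) *
          (p * (q * P1 (fX m) τ a n + (1 - q) * P2 (fX m) τ a n) + (1 - p) * (1 / 4)) := by
    intro m τ n
    simp only [Fin.sum_univ_two, ite_mul, mul_ite, mul_zero, zero_mul, one_mul, mul_one,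
      Finset.sum_ite_eq', Finset.sum_ite_eq, Finset.mem_univ, if_true, Finset.sum_add_distrib]
    congr 1 <;> split_ifs <;> simp [Finset.sum_ite_eq']
  have hM : pairM 3 = {{(0, 0), (1, 0)}, {(0, 0), (1, 1)}, {(0, 1), (1, 0)}, {(0, 1), (1, 1)},
    {(0, 0), (2, 0)}, {(0, 0), (2, 1)}, {(0, 1), (2, 0)}, {(0, 1), (2, 1)},
    {(1, 0), (2, 0)}, {(1, 0), (2, 1)}, {(1, 1), (2, 0)}, {(1, 1), (2, 1)}} := by decide
  have key : pairPayoff 3 (fun τ' n m =>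
        ∑ x : Fin 3, ∑ a : Fin 2, ∑ y : Fin 3, ∑ b : Fin 2,
          (if x = fX m then (1:ℝ) else 0) * (if τ' = gE a m then 1 else 0) *
            (if y = τ' then 1 else 0) *
            (p * (q * P1 x y a b + (1 - q) * P2 x y a b)
              + (1 - p) * (1 / 4)) * (if n = b then 1 else 0)) = (1 + p) / 2 := by
    rw [pairPayoff, hM]
    simp only [hN]
    rw [Finset.sum_insert (by decide), Finset.sum_insert (by decide),
      Finset.sum_insert (by decide), Finset.sum_insert (by decide),
      Finset.sum_insert (by decide), Finset.sum_insert (by decide),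
      Finset.sum_insert (by decide), Finset.sum_insert (by decide),
      Finset.sum_insert (by decide), Finset.sum_insert (by decide),
      Finset.sum_insert (by decide), Finset.sum_singleton]
    norm_num (config := { decide := true }) [Finset.sum_pair, fX, gE, S01, P1, P2,
      Finset.mem_insert, Finset.mem_singleton, Prod.mk.injEq, Fin.sum_univ_two]
    ring
  rw [key]
  linarith
end

section
/- Bob-to-Alice signalling correlations yield invalid conditional distributions (Appendix A claim): Let P : Fin X → Fin Y → Fin A → Fin B → ℝ satisfy P x y a b ≥ 0 and ∑_{a,b} P x y a b = 1 for all x,y, and suppose P is signalling from Bob to Alice: there exist x* ∈ Fin X, a ∈ Fin A, and y', y'' ∈ Fin Y with ∑_b P x* y' a b ≠ ∑_b P x* y'' a b. Then there exist T ≥ 1, a classical channel 𝒯 on Fin T, and conditional probability distributions p(x|m) (with m ∈ Fin X), p_e(τ|a,m), p(y|τ'), p_d(n|τ',b) (with n ∈ Fin B) such that the function 𝒩 m n := ∑_{a,b,x,y,τ,τ'} p(x|m)·p_e(τ|a,m)·P x y a b·𝒯 τ' τ·p(y|τ')·p_d(n|τ',b) satisfies ∑_n 𝒩 m n > 1 for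 some m ∈ Fin X. -/
open Finset

/-!
Fix Alice's input `x₀` at which Bob signals, and let `M y a = ∑ b, P x₀ y a b` be Alice's
marginal given Bob's input `y`. Alice encodes her output `a` as the input `σ a ∈ {y', y''}`
maximising `M · a`, sends it through the identity channel, and Bob feeds it to his box and
outputs `b`. The total weight of the resulting "distribution" is `∑ a, max (M y' a) (M y'' a)`,
which exceeds `∑ a, M y' a = 1` because the two marginals differ at `a₀`.
-/

theorem sum_lt_sum_max_of_ne {ι M : Type*} [AddCommMonoid M] [LinearOrder M]
    [IsOrderedCancelAddMonoid M] {s : Finset ι} {f g : ι → M}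
    (hfg : ∑ i ∈ s, f i = ∑ i ∈ s, g i) {j : ι} (hj : j ∈ s) (hne : f j ≠ g j) :
    ∑ i ∈ s, f i < ∑ i ∈ s, max (f i) (g i) := by
  rcases hne.lt_or_gt with h | h
  · exact sum_lt_sum (fun i _ => le_max_left _ _) ⟨j, hj, by simpa using h⟩
  · rw [hfg]
    exact sum_lt_sum (fun i _ => le_max_right _ _) ⟨j, hj, by simpa using h⟩

theorem sum_deterministic_protocol {ι κ α β : Type*} [Fintype ι] [Fintype κ] [Fintype α]
    [Fintype β] [DecidableEq ι] [DecidableEq κ] [DecidableEq β]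
    (P : ι → κ → α → β → ℝ) (σ : α → κ) (m : ι) :
    ∑ n : β, ∑ a : α, ∑ b : β, ∑ x : ι, ∑ y : κ, ∑ τ : κ, ∑ τ' : κ,
      (if x = m then 1 else 0) * (if τ = σ a then 1 else 0) * P x y a b *
        (if τ' = τ then 1 else 0) * (if y = τ' then 1 else 0) * (if n = b then 1 else 0) =
      ∑ a : α, ∑ b : β, P m (σ a) a b := by
  rw [sum_comm]
  refine sum_congr rfl fun a _ => ?_
  rw [sum_comm]
  refine sum_congr rfl fun b _ => ?_
  simp [mul_ite, ite_mul, sum_ite_eq, sum_ite_eq']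

theorem signalling_yields_invalid_distribution_general
    (X Y A B : ℕ)
    (P : Fin X → Fin Y → Fin A → Fin B → ℝ)
    (hP1 : ∀ x y, ∑ a : Fin A, ∑ b : Fin B, P x y a b = 1)
    (hsig : ∃ (x : Fin X) (a : Fin A) (y' y'' : Fin Y),
      ∑ b : Fin B, P x y' a b ≠ ∑ b : Fin B, P x y'' a b) :
    ∃ (T : ℕ) (_ : 1 ≤ T) (𝒯 : Fin T → Fin T → ℝ)
      (px : Fin X → Fin X → ℝ) (pe : Fin T → Fin A → Fin X → ℝ)
      (py : Fin Y → Fin T → ℝ) (pd : Fin B → Fin T → Fin B → ℝ),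
      (∀ τ' τ, 0 ≤ 𝒯 τ' τ) ∧ (∀ τ, ∑ τ' : Fin T, 𝒯 τ' τ = 1) ∧
      (∀ x m, 0 ≤ px x m) ∧ (∀ m, ∑ x : Fin X, px x m = 1) ∧
      (∀ τ a m, 0 ≤ pe τ a m) ∧ (∀ a m, ∑ τ : Fin T, pe τ a m = 1) ∧
      (∀ y τ', 0 ≤ py y τ') ∧ (∀ τ', ∑ y : Fin Y, py y τ' = 1) ∧
      (∀ n τ' b, 0 ≤ pd n τ' b) ∧ (∀ τ' b, ∑ n : Fin B, pd n τ' b = 1) ∧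
      ∃ m : Fin X,
        (∑ n : Fin B,
          ∑ a : Fin A, ∑ b : Fin B, ∑ x : Fin X, ∑ y : Fin Y,
            ∑ τ : Fin T, ∑ τ' : Fin T,
              px x m * pe τ a m * P x y a b * 𝒯 τ' τ * py y τ' * pd n τ' b) > 1 := by
  obtain ⟨x₀, a₀, y', y'', hne⟩ := hsig
  let M : Fin Y → Fin A → ℝ := fun y a => ∑ b, P x₀ y a b
  let σ : Fin A → Fin Y := fun a => if M y' a ≤ M y'' a then y'' else y'
  have hσ : ∀ a, M (σ a) a = max (M y' a) (M y'' a) := fun a =>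
    (apply_ite (M · a) _ _ _).trans (max_def _ _).symm
  refine ⟨Y, y'.pos, fun τ' τ => if τ' = τ then 1 else 0, fun x m => if x = m then 1 else 0,
    fun τ a _ => if τ = σ a then 1 else 0, fun y τ' => if y = τ' then 1 else 0,
    fun n _ b => if n = b then 1 else 0,
    fun _ _ => by positivity, fun _ => by simp, fun _ _ => by positivity, fun _ => by simp,
    fun _ _ _ => by positivity, fun _ _ => by simp, fun _ _ => by positivity, fun _ => by simp,
    fun _ _ _ => by positivity, fun _ _ => by simp, x₀, ?_⟩
  rw [gt_iff_lt, sum_deterministic_protocol P σ x₀]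
  calc (1 : ℝ) = ∑ a, M y' a := (hP1 x₀ y').symm
    _ < ∑ a, max (M y' a) (M y'' a) :=
      sum_lt_sum_max_of_ne ((hP1 x₀ y').trans (hP1 x₀ y'').symm) (mem_univ a₀) hne
    _ = ∑ a, M (σ a) a := by simp only [hσ]

/-- Bob-to-Alice signalling correlations yield invalid conditional distributions
(Appendix A claim). Here Alice's input set is `Fin X` and Bob's output set is
`Fin B`. -/
theorem signalling_yields_invalid_distribution
    (X Y A B : ℕ)
    (P : Fin X → Fin Y → Fin A → Fin B → ℝ)
    (hP0 : ∀ x y a b, 0 ≤ P x y a b)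
    (hP1 : ∀ x y, ∑ a : Fin A, ∑ b : Fin B, P x y a b = 1)
    (hsig : ∃ (x : Fin X) (a : Fin A) (y' y'' : Fin Y),
      ∑ b : Fin B, P x y' a b ≠ ∑ b : Fin B, P x y'' a b) :
    ∃ (T : ℕ) (_ : 1 ≤ T) (𝒯 : Fin T → Fin T → ℝ)
      (px : Fin X → Fin X → ℝ) (pe : Fin T → Fin A → Fin X → ℝ)
      (py : Fin Y → Fin T → ℝ) (pd : Fin B → Fin T → Fin B → ℝ),
      (∀ τ' τ, 0 ≤ 𝒯 τ' τ) ∧ (∀ τ, ∑ τ' : Fin T, 𝒯 τ' τ = 1) ∧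
      (∀ x m, 0 ≤ px x m) ∧ (∀ m, ∑ x : Fin X, px x m = 1) ∧
      (∀ τ a m, 0 ≤ pe τ a m) ∧ (∀ a m, ∑ τ : Fin T, pe τ a m = 1) ∧
      (∀ y τ', 0 ≤ py y τ') ∧ (∀ τ', ∑ y : Fin Y, py y τ' = 1) ∧
      (∀ n τ' b, 0 ≤ pd n τ' b) ∧ (∀ τ' b, ∑ n : Fin B, pd n τ' b = 1) ∧
      ∃ m : Fin X,
        (∑ n : Fin B,
          ∑ a : Fin A, ∑ b : Fin B, ∑ x : Fin X, ∑ y : Fin Y,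
            ∑ τ : Fin T, ∑ τ' : Fin T,
              px x m * pe τ a m * P x y a b * 𝒯 τ' τ * py y τ' * pd n τ' b) > 1 :=
  signalling_yields_invalid_distribution_general X Y A B P hP1 hsig
end
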